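/- arXiv:2506.12872 — 4 statements merged into one kernel-verified Lean document; each statement's English description precedes it below -/
import Mathlib

section
/- Fix a finite state space S, rates q, constants C₀ > 0 and a time horizon t > 0. There exists a constant C (depending only on S, the rates, C₀ and t) such that the following holds for every N: let B and B̂ be N×N matrices with nonnegative entries such that every row sum of B is at most C₀ and ‖B̂‖₂ ≤ C₀; let z, ẑ : [0,t] → ([0,1]^S)^N be solutions of the NIMFA system with matrices B and B̂ respectively, with identical initial conditions z_{i,s}(0) = ẑ_{i,s}(0). Then, setting Δ̃_i(t) = sup_{0 ≤ τ ≤ t} max_{s ∈ S} |z_{i,s}(τ) − ẑ_{i,s}(τ)|, one has (1/N)·Σ_{i=1}^{N} Δ̃_i(t)² ≤ C·‖B − B̂‖₂². -/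
open Finset

/-- The ℓ²→ℓ² operator (spectral) norm of a real square matrix. -/
noncomputable def opNorm2 {N : ℕ} (M : Matrix (Fin N) (Fin N) ℝ) : ℝ :=
  ‖LinearMap.toContinuousLinearMap (Matrix.toEuclideanLin M)‖

/-- Right-hand side of the NIMFA ODE system for the state `z : Fin N → S → ℝ`:
`(d/dt) z_{i,s} = Σ_{s'} q_{s'→s} z_{i,s'} + Σ_{s',s̃} q_{s̃;s'→s} z_{i,s'}·(B z_{·,s̃})_i`,
where `qs s' s = q_{s'→s}` and `qi s̃ s' s = q_{s̃;s'→s}`. -/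
def nimfaRHS {S : Type*} [Fintype S] {N : ℕ} (qs : S → S → ℝ) (qi : S → S → S → ℝ)
    (B : Matrix (Fin N) (Fin N) ℝ) (z : Fin N → S → ℝ) (i : Fin N) (s : S) : ℝ :=
  (∑ s', qs s' s * z i s') +
    ∑ s', ∑ st, qi st s' s * z i s' * (∑ j, B i j * z j st)

/-!
Flatten the difference `Δ = z - ẑ` to a vector in `ℓ²(Fin N × S)`. The interaction term splits as
`z_{i,s'}(Bz)_{i,s̃} - ẑ_{i,s'}(B̂ẑ)_{i,s̃}
  = (Bz)_{i,s̃} Δ_{i,s'} + ẑ_{i,s'}(BΔ)_{i,s̃} + ẑ_{i,s'}((B - B̂)ẑ)_{i,s̃}`;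
the row sums of `B` and `‖B‖₂` control the first two terms by `‖Δ‖`, while the last is at most of
size `‖B - B̂‖₂ ‖ẑ‖ ≤ ‖B - B̂‖₂ √(N|S|)`. So `‖Δ'‖ ≤ K ‖Δ‖ + ε` with `ε ∼ √N ‖B - B̂‖₂`, and
Grönwall gives `‖Δ'‖ ≤ ε e^{Kt}` on `[0, t]`. As the supremum over time sits inside the sum over
`i`, bound `|Δ_{i,s}(τ)|` by `∫₀ᵗ |Δ'_{i,s}|`: by Minkowski's integral inequality this vector has
`ℓ²` norm at most `t ε e^{Kt}`, and dividing its square by `N` gives the claim.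
-/

theorem nimfaRHS_sub_nimfaRHS {S : Type*} [Fintype S] {N : ℕ} (qs : S → S → ℝ)
    (qi : S → S → S → ℝ) (B Bhat : Matrix (Fin N) (Fin N) ℝ) (z zhat : Fin N → S → ℝ)
    (i : Fin N) (s : S) :
    nimfaRHS qs qi B z i s - nimfaRHS qs qi Bhat zhat i s =
      ∑ s', (qs s' s + ∑ st, qi st s' s * ∑ j, B i j * z j st) * (z i s' - zhat i s') +
      ∑ st, (∑ s', qi st s' s * zhat i s') * ∑ j, B i j * (z j st - zhat j st) +
      ∑ st, (∑ s', qi st s' s * zhat i s') * ∑ j, (B - Bhat) i j * zhat j st := by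
  have key : ∀ s' st, qi st s' s * z i s' * (∑ j, B i j * z j st) -
      qi st s' s * zhat i s' * (∑ j, Bhat i j * zhat j st) =
      qi st s' s * (∑ j, B i j * z j st) * (z i s' - zhat i s') +
      qi st s' s * zhat i s' * (∑ j, B i j * (z j st - zhat j st)) +
      qi st s' s * zhat i s' * ∑ j, (B - Bhat) i j * zhat j st := by
    intro s' st
    simp only [Matrix.sub_apply, mul_sub, sub_mul, sum_sub_distrib]
    ring
  calc _ = ∑ s', (qs s' s * (z i s' - zhat i s') +
        ∑ st, (qi st s' s * z i s' * (∑ j, B i j * z j st) -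
          qi st s' s * zhat i s' * (∑ j, Bhat i j * zhat j st))) := by
        simp only [nimfaRHS, mul_sub, sum_add_distrib, sum_sub_distrib]
        ring
    _ = _ := by
        simp only [key, add_mul, sum_mul, sum_add_distrib]
        rw [sum_comm (f := fun st s' => qi st s' s * zhat i s' * _),
          sum_comm (f := fun st s' => qi st s' s * zhat i s' * _)]
        ring

section Flatten

variable {ι S : Type*}

def flat (x : ι → S → ℝ) : EuclideanSpace ℝ (ι × S) := WithLp.toLp 2 (Function.uncurry x)

@[simp]
theorem flat_apply (x : ι → S → ℝ) (p : ι × S) : flat x p = x p.1 p.2 := rfl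

theorem flat_sub (x y : ι → S → ℝ) : flat (x - y) = flat x - flat y := rfl

theorem flat_add (x y : ι → S → ℝ) : flat (x + y) = flat x + flat y := rfl

theorem continuousOn_flat {x : ℝ → ι → S → ℝ} {T : Set ℝ}
    (h : ∀ i s, ContinuousOn (fun u => x u i s) T) : ContinuousOn (fun u => flat (x u)) T :=
  (EuclideanSpace.equiv (ι × S) ℝ).symm.continuous.comp_continuousOn
    (continuousOn_pi.2 fun p => h p.1 p.2)

variable [Fintype ι] [Fintype S]

theorem norm_flat_sq (x : ι → S → ℝ) : ‖flat x‖ ^ 2 = ∑ i, ∑ s, x i s ^ 2 := by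
  simp [EuclideanSpace.norm_sq_eq, Fintype.sum_prod_type]

theorem norm_flat_le {x : ι → S → ℝ} {c : ℝ} (hc : 0 ≤ c) (h : ∑ i, ∑ s, x i s ^ 2 ≤ c ^ 2) :
    ‖flat x‖ ≤ c :=
  (pow_le_pow_iff_left₀ (norm_nonneg _) hc two_ne_zero).1 (by rwa [norm_flat_sq])

theorem norm_flat_le_sqrt_card {x : ι → S → ℝ} (hx : ∀ i s, |x i s| ≤ 1) :
    ‖flat x‖ ≤ √(Fintype.card ι * Fintype.card S) := by
  refine norm_flat_le (Real.sqrt_nonneg _) ?_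
  rw [Real.sq_sqrt (by positivity)]
  calc ∑ i, ∑ s, x i s ^ 2 ≤ ∑ _i : ι, ∑ _s : S, (1 : ℝ) := by
        gcongr with i _ s _
        exact (sq_le_one_iff_abs_le_one _).2 (hx i s)
    _ = _ := by simp

theorem hasDerivAt_flat {x : ℝ → ι → S → ℝ} {x' : ι → S → ℝ} {τ : ℝ}
    (h : ∀ i s, HasDerivAt (fun u => x u i s) (x' i s) τ) :
    HasDerivAt (fun u => flat (x u)) (flat x') τ :=
  (EuclideanSpace.equiv (ι × S) ℝ).symm.hasFDerivAt.comp_hasDerivAt τ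
    (hasDerivAt_pi.2 fun p => h p.1 p.2)

theorem norm_flat_sum_mul_le (c : ι → S → S → ℝ) (v : ι → S → ℝ) {M : ℝ} (hM : 0 ≤ M)
    (hc : ∀ i s k, |c i s k| ≤ M) :
    ‖flat (fun i s => ∑ k, c i s k * v i k)‖ ≤ Fintype.card S * M * ‖flat v‖ := by
  refine norm_flat_le (by positivity) ?_
  calc ∑ i, ∑ s, (∑ k, c i s k * v i k) ^ 2
      ≤ ∑ i, ∑ _s : S, Fintype.card S * ∑ k, M ^ 2 * v i k ^ 2 := by
        gcongr with i _ s _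
        refine sq_sum_le_card_mul_sum_sq.trans ?_
        rw [card_univ]
        gcongr with k _
        rw [mul_pow]
        exact mul_le_mul_of_nonneg_right (sq_le_sq' (abs_le.1 (hc i s k)).1 (abs_le.1 (hc i s k)).2)
          (sq_nonneg _)
    _ = (Fintype.card S * M * ‖flat v‖) ^ 2 := by
        simp only [mul_pow, norm_flat_sq, ← mul_sum, sum_const, card_univ,
          nsmul_eq_mul]
        ring

end Flatten

theorem sum_sq_mulVec_le {N : ℕ} (M : Matrix (Fin N) (Fin N) ℝ) (y : Fin N → ℝ) :
    ∑ i, M.mulVec y i ^ 2 ≤ opNorm2 M ^ 2 * ∑ j, y j ^ 2 := by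
  have h := (LinearMap.toContinuousLinearMap (Matrix.toEuclideanLin M)).le_opNorm
    (WithLp.toLp 2 y)
  have h2 := pow_le_pow_left₀ (norm_nonneg _) h 2
  rw [mul_pow, EuclideanSpace.norm_sq_eq, EuclideanSpace.norm_sq_eq] at h2
  simpa [opNorm2] using h2

theorem norm_flat_mul_le {S : Type*} [Fintype S] {N : ℕ} (M : Matrix (Fin N) (Fin N) ℝ)
    (x : Fin N → S → ℝ) :
    ‖flat (fun i s => ∑ j, M i j * x j s)‖ ≤ opNorm2 M * ‖flat x‖ := by
  refine norm_flat_le (mul_nonneg (norm_nonneg _) (norm_nonneg _)) ?_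
  calc ∑ i, ∑ s, (∑ j, M i j * x j s) ^ 2 = ∑ s, ∑ i, M.mulVec (fun j => x j s) i ^ 2 :=
        sum_comm
    _ ≤ ∑ s, opNorm2 M ^ 2 * ∑ j, x j s ^ 2 := by
        gcongr with s _
        exact sum_sq_mulVec_le M _
    _ = (opNorm2 M * ‖flat x‖) ^ 2 := by
        rw [mul_pow, norm_flat_sq, ← mul_sum, sum_comm]

theorem abs_apply_le_norm {S : Type*} [Fintype S] (q : S → S → ℝ) (a b : S) : |q a b| ≤ ‖q‖ :=
  (norm_le_pi_norm (q a) b).trans (norm_le_pi_norm q a)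

theorem abs_sum_mul_le {κ : Type*} [Fintype κ] {a b : κ → ℝ} {α β : ℝ} (hα : 0 ≤ α)
    (ha : ∀ k, |a k| ≤ α) (hb : ∀ k, |b k| ≤ β) :
    |∑ k, a k * b k| ≤ Fintype.card κ * (α * β) := by
  refine (abs_sum_le_sum_abs _ _).trans ?_
  calc ∑ k, |a k * b k| ≤ ∑ _k : κ, α * β := by
        gcongr with k _
        rw [abs_mul]
        exact mul_le_mul (ha k) (hb k) (abs_nonneg _) hα
    _ = _ := by simp

theorem opNorm2_add_le {N : ℕ} (M M' : Matrix (Fin N) (Fin N) ℝ) :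
    opNorm2 (M + M') ≤ opNorm2 M + opNorm2 M' := by
  simp only [opNorm2, map_add]
  exact norm_add_le _ _

theorem continuousOn_flat_nimfaRHS {S : Type*} [Fintype S] {N : ℕ} (qs : S → S → ℝ)
    (qi : S → S → S → ℝ) (B : Matrix (Fin N) (Fin N) ℝ) {z : ℝ → Fin N → S → ℝ} {T : Set ℝ}
    (hz : ∀ i s, ContinuousOn (fun u => z u i s) T) :
    ContinuousOn (fun u => flat (nimfaRHS qs qi B (z u))) T :=
  continuousOn_flat fun i s => by
    simp only [nimfaRHS]
    fun_prop

section Lipschitz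

variable {S : Type*} [Fintype S] (qs : S → S → ℝ) (qi : S → S → S → ℝ)

def nimfaLipConst (C₀ C₁ : ℝ) : ℝ :=
  (Fintype.card S : ℝ) * (‖qs‖ + Fintype.card S * ‖qi‖ * C₀ + Fintype.card S * ‖qi‖ * C₁)

theorem nimfaLipConst_nonneg {C₀ C₁ : ℝ} (hC₀ : 0 ≤ C₀) (hC₁ : 0 ≤ C₁) :
    0 ≤ nimfaLipConst qs qi C₀ C₁ := by
  unfold nimfaLipConst
  positivity

theorem norm_flat_nimfaRHS_sub_le {N : ℕ} {B Bhat : Matrix (Fin N) (Fin N) ℝ} {C₀ C₁ : ℝ}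
    (hC₀ : 0 ≤ C₀) (hB : ∀ i j, 0 ≤ B i j) (hBrow : ∀ i, ∑ j, B i j ≤ C₀)
    (hBnorm : opNorm2 B ≤ C₁) {z zhat : Fin N → S → ℝ} (hz : ∀ i s, z i s ∈ Set.Icc (0 : ℝ) 1)
    (hzhat : ∀ i s, |zhat i s| ≤ 1) :
    ‖flat (nimfaRHS qs qi B z) - flat (nimfaRHS qs qi Bhat zhat)‖ ≤
      nimfaLipConst qs qi C₀ C₁ * ‖flat z - flat zhat‖ +
        (Fintype.card S : ℝ) ^ 2 * ‖qi‖ * √(N * Fintype.card S) * opNorm2 (B - Bhat) := by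
  set cS := (Fintype.card S : ℝ)
  have hqi : ∀ st s' s, |qi st s' s| ≤ ‖qi‖ := fun st s' s =>
    (abs_apply_le_norm (qi st) s' s).trans (norm_le_pi_norm qi st)
  have hBz : ∀ i st, |∑ j, B i j * z j st| ≤ C₀ := fun i st => by
    have h0 : 0 ≤ ∑ j, B i j * z j st := sum_nonneg fun j _ => mul_nonneg (hB i j) (hz j st).1
    rw [abs_of_nonneg h0]
    calc ∑ j, B i j * z j st ≤ ∑ j, B i j :=
          sum_le_sum fun j _ => mul_le_of_le_one_right (hB i j) (hz j st).2
      _ ≤ C₀ := hBrow i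
  have hcoef₁ : ∀ i s s', |qs s' s + ∑ st, qi st s' s * ∑ j, B i j * z j st| ≤
      ‖qs‖ + cS * (‖qi‖ * C₀) := fun i s s' =>
    (abs_add_le _ _).trans (add_le_add (abs_apply_le_norm qs s' s)
      (abs_sum_mul_le (norm_nonneg _) (fun st => hqi st s' s) (hBz i)))
  have hcoef₂ : ∀ i s st, |∑ s', qi st s' s * zhat i s'| ≤ cS * (‖qi‖ * 1) := fun i s st =>
    abs_sum_mul_le (norm_nonneg _) (fun s' => hqi st s' s) (hzhat i)
  have hdecomp : flat (nimfaRHS qs qi B z) - flat (nimfaRHS qs qi Bhat zhat) =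
      flat (fun i s => ∑ s', (qs s' s + ∑ st, qi st s' s * ∑ j, B i j * z j st) *
        (z - zhat) i s') +
      flat (fun i s => ∑ st, (∑ s', qi st s' s * zhat i s') * ∑ j, B i j * (z - zhat) j st) +
      flat (fun i s => ∑ st, (∑ s', qi st s' s * zhat i s') * ∑ j, (B - Bhat) i j * zhat j st) := by
    rw [← flat_sub, ← flat_add, ← flat_add]
    congr 1
    funext i s
    exact nimfaRHS_sub_nimfaRHS qs qi B Bhat z zhat i s
  have h₁ := norm_flat_sum_mul_le _ (z - zhat) (by positivity) hcoef₁
  have h₂ := (norm_flat_sum_mul_le _ _ (by positivity) hcoef₂).trans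
    (mul_le_mul_of_nonneg_left ((norm_flat_mul_le B (z - zhat)).trans
      (mul_le_mul_of_nonneg_right hBnorm (norm_nonneg _))) (by positivity))
  have h₃ := (norm_flat_sum_mul_le _ _ (by positivity) hcoef₂).trans
    (mul_le_mul_of_nonneg_left ((norm_flat_mul_le (B - Bhat) zhat).trans
      (mul_le_mul_of_nonneg_left (norm_flat_le_sqrt_card hzhat) (norm_nonneg _)))
      (by positivity))
  rw [hdecomp, ← flat_sub]
  refine (norm_add₃_le).trans ?_
  simp only [Fintype.card_fin] at h₃
  unfold nimfaLipConst
  linarith [h₁, h₂, h₃]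

end Lipschitz

theorem norm_deriv_le_mul_exp_of_norm_deriv_le {E : Type*} [NormedAddCommGroup E] [NormedSpace ℝ E]
    {f f' : ℝ → E} {K ε t : ℝ} (hK : 0 ≤ K) (hf : ∀ τ ∈ Set.Icc 0 t, HasDerivAt f (f' τ) τ)
    (h0 : f 0 = 0) (hbound : ∀ τ ∈ Set.Icc 0 t, ‖f' τ‖ ≤ K * ‖f τ‖ + ε) :
    ∀ τ ∈ Set.Icc 0 t, ‖f' τ‖ ≤ ε * Real.exp (K * τ) := by
  intro τ hτ
  have hgron := norm_le_gronwallBound_of_norm_deriv_right_le (δ := 0)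
    (fun x hx => (hf x hx).continuousAt.continuousWithinAt)
    (fun x hx => (hf x (Set.Ico_subset_Icc_self hx)).hasDerivWithinAt) (by rw [h0, norm_zero])
    (fun x hx => hbound x (Set.Ico_subset_Icc_self hx)) τ hτ
  have hexp : K * gronwallBound 0 K ε τ + ε = ε * Real.exp (K * τ) := by
    rcases hK.eq_or_lt with rfl | hK
    · simp
    · rw [gronwallBound_of_K_ne_0 hK.ne']
      field_simp
      ring
  calc ‖f' τ‖ ≤ K * ‖f τ‖ + ε := hbound τ hτ
    _ ≤ K * gronwallBound 0 K ε τ + ε := by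
        gcongr
        simpa using hgron
    _ = ε * Real.exp (K * τ) := hexp

section Integral

variable {ι : Type*} [Fintype ι] {g : ℝ → EuclideanSpace ℝ ι} {t : ℝ}

theorem abs_apply_le_integral_abs {f : ℝ → EuclideanSpace ℝ ι}
    (hf : ∀ τ ∈ Set.Icc 0 t, HasDerivAt f (g τ) τ) (hg : ContinuousOn g (Set.Icc 0 t))
    (h0 : f 0 = 0) : ∀ τ ∈ Set.Icc 0 t, ∀ p, |f τ p| ≤ ∫ u in 0..t, |g u p| := by
  intro τ hτ p
  have hsub : Set.uIcc 0 τ ⊆ Set.Icc 0 t := by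
    rw [Set.uIcc_of_le hτ.1]
    exact Set.Icc_subset_Icc_right hτ.2
  have hgp : ContinuousOn (fun u => g u p) (Set.Icc 0 t) :=
    (EuclideanSpace.proj p).continuous.comp_continuousOn hg
  have hftc : ∫ u in 0..τ, g u p = f τ p := by
    rw [intervalIntegral.integral_eq_sub_of_hasDerivAt
      (fun x hx => (EuclideanSpace.proj p).hasFDerivAt.comp_hasDerivAt x (hf x (hsub hx)))
      ((hgp.mono hsub).intervalIntegrable)]
    simp [h0]
  rw [← hftc]
  calc |∫ u in 0..τ, g u p| ≤ ∫ u in 0..τ, |g u p| :=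
        intervalIntegral.abs_integral_le_integral_abs hτ.1
    _ ≤ ∫ u in 0..t, |g u p| :=
        intervalIntegral.integral_mono_interval le_rfl hτ.1 hτ.2
          (Filter.Eventually.of_forall fun _ => abs_nonneg _)
          (hgp.abs.intervalIntegrable_of_Icc (hτ.1.trans hτ.2))

theorem norm_integral_abs_le {M : ℝ} (ht : 0 ≤ t) (hg : ContinuousOn g (Set.Icc 0 t))
    (hM : ∀ τ ∈ Set.Icc 0 t, ‖g τ‖ ≤ M) :
    ‖(WithLp.toLp 2 fun p => ∫ u in 0..t, |g u p| : EuclideanSpace ℝ ι)‖ ≤ M * t := by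
  set gabs : ℝ → EuclideanSpace ℝ ι := fun u => WithLp.toLp 2 fun p => |g u p|
  have hint : IntervalIntegrable gabs MeasureTheory.volume 0 t :=
    ((EuclideanSpace.equiv ι ℝ).symm.continuous.comp_continuousOn
      (continuousOn_pi.2 fun p =>
        ((EuclideanSpace.proj p).continuous.comp_continuousOn hg).abs)).intervalIntegrable_of_Icc ht
  have hcomm : (WithLp.toLp 2 fun p => ∫ u in 0..t, |g u p| : EuclideanSpace ℝ ι) =
      ∫ u in 0..t, gabs u := by
    ext p
    exact ((EuclideanSpace.proj p).intervalIntegral_comp_comm hint)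
  have hnorm : ∀ u, ‖gabs u‖ = ‖g u‖ := fun u => by
    simp [gabs, EuclideanSpace.norm_eq]
  rw [hcomm]
  refine (intervalIntegral.norm_integral_le_of_norm_le_const fun u hu => ?_).trans_eq
    (by rw [sub_zero, abs_of_nonneg ht])
  rw [hnorm]
  exact hM u (Set.Ioc_subset_Icc_self (Set.uIoc_of_le ht ▸ hu))

end Integral

theorem sum_sq_iSup_abs_le {T ι S : Type*} [Fintype ι] [Fintype S] (F : T → ι → S → ℝ)
    (H : EuclideanSpace ℝ (ι × S)) (h : ∀ τ i s, |F τ i s| ≤ H (i, s)) :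
    ∑ i, (⨆ τ, ⨆ s, |F τ i s|) ^ 2 ≤ ‖H‖ ^ 2 := by
  have hrow : ∀ i, (⨆ τ, ⨆ s, |F τ i s|) ^ 2 ≤ ∑ s, H (i, s) ^ 2 := fun i => by
    have hH : ∀ s, H (i, s) ≤ √(∑ s, H (i, s) ^ 2) := fun s =>
      Real.le_sqrt_of_sq_le (single_le_sum (fun s _ => sq_nonneg (H (i, s))) (mem_univ s))
    have hsup : ⨆ τ, ⨆ s, |F τ i s| ≤ √(∑ s, H (i, s) ^ 2) :=
      Real.iSup_le (fun τ => Real.iSup_le (fun s => (h τ i s).trans (hH s)) (Real.sqrt_nonneg _))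
        (Real.sqrt_nonneg _)
    calc (⨆ τ, ⨆ s, |F τ i s|) ^ 2 ≤ √(∑ s, H (i, s) ^ 2) ^ 2 :=
          pow_le_pow_left₀ (Real.iSup_nonneg fun τ => Real.iSup_nonneg fun s => abs_nonneg _)
            hsup 2
      _ = ∑ s, H (i, s) ^ 2 := Real.sq_sqrt (sum_nonneg fun s _ => sq_nonneg _)
  calc ∑ i, (⨆ τ, ⨆ s, |F τ i s|) ^ 2 ≤ ∑ i, ∑ s, H (i, s) ^ 2 := sum_le_sum fun i _ => hrow i
    _ = ‖H‖ ^ 2 := by simp [EuclideanSpace.norm_sq_eq, Fintype.sum_prod_type]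

theorem sum_sq_iSup_abs_sub_le_card {S : Type*} {N : ℕ} {t : ℝ} {z zhat : ℝ → Fin N → S → ℝ}
    (hz01 : ∀ τ ∈ Set.Icc (0:ℝ) t, ∀ i s, z τ i s ∈ Set.Icc (0:ℝ) 1)
    (hzhat01 : ∀ τ ∈ Set.Icc (0:ℝ) t, ∀ i s, zhat τ i s ∈ Set.Icc (0:ℝ) 1) :
    ∑ i, (⨆ τ : Set.Icc (0:ℝ) t, ⨆ s : S, |z τ i s - zhat τ i s|) ^ 2 ≤ N := by
  have hrow : ∀ i, (⨆ τ : Set.Icc (0:ℝ) t, ⨆ s : S, |z τ i s - zhat τ i s|) ^ 2 ≤ 1 := fun i =>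
    pow_le_one₀ (Real.iSup_nonneg fun τ => Real.iSup_nonneg fun s => abs_nonneg _)
      (Real.iSup_le (fun τ => Real.iSup_le (fun s => abs_sub_le_iff.2
        ⟨by linarith [(hz01 τ τ.2 i s).2, (hzhat01 τ τ.2 i s).1],
         by linarith [(hz01 τ τ.2 i s).1, (hzhat01 τ τ.2 i s).2]⟩) zero_le_one) zero_le_one)
  calc _ ≤ ∑ _i : Fin N, (1 : ℝ) := sum_le_sum fun i _ => hrow i
    _ = N := by simp

theorem one_div_mul_le_of_le_mul {N : ℕ} {a b : ℝ} (hb : 0 ≤ b) (h : a ≤ N * b) :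
    1 / N * a ≤ b := by
  rcases Nat.eq_zero_or_pos N with rfl | hN
  · simpa using hb
  · rw [one_div_mul_eq_div, div_le_iff₀ (by exact_mod_cast hN)]
    linarith

theorem sum_sq_iSup_abs_sub_le {S : Type*} [Fintype S] (qs : S → S → ℝ) (qi : S → S → S → ℝ)
    {N : ℕ} {B Bhat : Matrix (Fin N) (Fin N) ℝ} {C₀ C₁ t : ℝ} (hC₀ : 0 ≤ C₀) (ht : 0 ≤ t)
    (hB : ∀ i j, 0 ≤ B i j) (hBrow : ∀ i, ∑ j, B i j ≤ C₀) (hBnorm : opNorm2 B ≤ C₁)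
    {z zhat : ℝ → Fin N → S → ℝ}
    (hz01 : ∀ τ ∈ Set.Icc (0:ℝ) t, ∀ i s, z τ i s ∈ Set.Icc (0:ℝ) 1)
    (hzhat01 : ∀ τ ∈ Set.Icc (0:ℝ) t, ∀ i s, zhat τ i s ∈ Set.Icc (0:ℝ) 1)
    (hz : ∀ τ ∈ Set.Icc (0:ℝ) t, ∀ i s,
      HasDerivAt (fun u => z u i s) (nimfaRHS qs qi B (z τ) i s) τ)
    (hzhat : ∀ τ ∈ Set.Icc (0:ℝ) t, ∀ i s,
      HasDerivAt (fun u => zhat u i s) (nimfaRHS qs qi Bhat (zhat τ) i s) τ)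
    (hinit : ∀ i s, z 0 i s = zhat 0 i s) :
    ∑ i, (⨆ τ : Set.Icc (0:ℝ) t, ⨆ s : S, |z τ i s - zhat τ i s|) ^ 2 ≤
      N * (Fintype.card S ^ 5 * ‖qi‖ ^ 2 * (t * Real.exp (nimfaLipConst qs qi C₀ C₁ * t)) ^ 2 *
        opNorm2 (B - Bhat) ^ 2) := by
  set K := nimfaLipConst qs qi C₀ C₁
  set ε := (Fintype.card S : ℝ) ^ 2 * ‖qi‖ * √(N * Fintype.card S) * opNorm2 (B - Bhat)
  have hε : 0 ≤ ε := mul_nonneg (by positivity) (norm_nonneg _)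
  have hK : 0 ≤ K :=
    nimfaLipConst_nonneg qs qi hC₀ ((norm_nonneg _).trans hBnorm)
  set f : ℝ → EuclideanSpace ℝ (Fin N × S) := fun u => flat (z u) - flat (zhat u)
  set g : ℝ → EuclideanSpace ℝ (Fin N × S) := fun u =>
    flat (nimfaRHS qs qi B (z u)) - flat (nimfaRHS qs qi Bhat (zhat u))
  have hf : ∀ τ ∈ Set.Icc 0 t, HasDerivAt f (g τ) τ := fun τ hτ =>
    (hasDerivAt_flat (hz τ hτ)).sub (hasDerivAt_flat (hzhat τ hτ))
  have hg : ContinuousOn g (Set.Icc 0 t) :=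
    (continuousOn_flat_nimfaRHS qs qi B fun i s τ hτ =>
      (hz τ hτ i s).continuousAt.continuousWithinAt).sub
    (continuousOn_flat_nimfaRHS qs qi Bhat fun i s τ hτ =>
      (hzhat τ hτ i s).continuousAt.continuousWithinAt)
  have h0 : f 0 = 0 := by
    rw [sub_eq_zero]
    exact congrArg flat (funext₂ hinit)
  have hLip : ∀ τ ∈ Set.Icc 0 t, ‖g τ‖ ≤ K * ‖f τ‖ + ε := fun τ hτ =>
    norm_flat_nimfaRHS_sub_le qs qi hC₀ hB hBrow hBnorm (hz01 τ hτ)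
      fun i s => abs_le.2 ⟨by linarith [(hzhat01 τ hτ i s).1], (hzhat01 τ hτ i s).2⟩
  have hgM : ∀ τ ∈ Set.Icc 0 t, ‖g τ‖ ≤ ε * Real.exp (K * t) := fun τ hτ =>
    (norm_deriv_le_mul_exp_of_norm_deriv_le hK hf h0 hLip τ hτ).trans (by gcongr; exact hτ.2)
  calc ∑ i, (⨆ τ : Set.Icc (0:ℝ) t, ⨆ s : S, |z τ i s - zhat τ i s|) ^ 2
      ≤ ‖(WithLp.toLp 2 fun p => ∫ u in 0..t, |g u p| : EuclideanSpace ℝ (Fin N × S))‖ ^ 2 :=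
        sum_sq_iSup_abs_le (fun (τ : Set.Icc (0:ℝ) t) i s => z τ i s - zhat τ i s) _
          fun τ i s => abs_apply_le_integral_abs hf hg h0 τ τ.2 (i, s)
    _ ≤ (ε * Real.exp (K * t) * t) ^ 2 :=
        pow_le_pow_left₀ (norm_nonneg _) (norm_integral_abs_le ht hg hgM) 2
    _ = _ := by
        simp only [ε, mul_pow, Real.sq_sqrt (by positivity : (0:ℝ) ≤ N * Fintype.card S)]
        ring

theorem stmt_2_general (S : Type) [Fintype S]
    (qs : S → S → ℝ) (qi : S → S → S → ℝ)
    (C₀ t : ℝ) (hC₀ : 0 < C₀) (ht : 0 < t) :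
    ∃ C : ℝ, 0 < C ∧
      ∀ (N : ℕ) (B Bhat : Matrix (Fin N) (Fin N) ℝ),
        (∀ i j, 0 ≤ B i j) → (∀ i j, 0 ≤ Bhat i j) →
        (∀ i, ∑ j, B i j ≤ C₀) → opNorm2 Bhat ≤ C₀ →
        ∀ (z zhat : ℝ → Fin N → S → ℝ),
        -- the trajectories take values in [0,1]
        (∀ τ ∈ Set.Icc (0:ℝ) t, ∀ i s, z τ i s ∈ Set.Icc (0:ℝ) 1) →
        (∀ τ ∈ Set.Icc (0:ℝ) t, ∀ i s, zhat τ i s ∈ Set.Icc (0:ℝ) 1) →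
        -- `z` solves NIMFA with matrix `B`, `zhat` solves NIMFA with matrix `Bhat`
        (∀ τ ∈ Set.Icc (0:ℝ) t, ∀ i s,
          HasDerivAt (fun u => z u i s) (nimfaRHS qs qi B (z τ) i s) τ) →
        (∀ τ ∈ Set.Icc (0:ℝ) t, ∀ i s,
          HasDerivAt (fun u => zhat u i s) (nimfaRHS qs qi Bhat (zhat τ) i s) τ) →
        -- identical initial conditions
        (∀ i s, z 0 i s = zhat 0 i s) →
        (1 / N) * ∑ i,
            (⨆ τ : Set.Icc (0:ℝ) t, ⨆ s : S, |z τ i s - zhat τ i s|) ^ 2 ≤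
          C * opNorm2 (B - Bhat) ^ 2 := by
  set X := Fintype.card S ^ 5 * ‖qi‖ ^ 2 *
    (t * Real.exp (nimfaLipConst qs qi C₀ (C₀ + 1) * t)) ^ 2
  have hX : 0 ≤ X := by positivity
  refine ⟨X + 1, by positivity, ?_⟩
  intro N B Bhat hB _ hBrow hBhat z zhat hz01 hzhat01 hz hzhat hinit
  set d := opNorm2 (B - Bhat)
  -- `‖B‖₂` is only controlled through `‖B̂‖₂ + ‖B - B̂‖₂`, so a large `‖B - B̂‖₂` is handled
  -- by the trivial bound `|z - ẑ| ≤ 1`.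
  rcases le_or_gt 1 d with hd | hd
  · refine one_div_mul_le_of_le_mul (by positivity)
      ((sum_sq_iSup_abs_sub_le_card hz01 hzhat01).trans ?_)
    exact le_mul_of_one_le_right (Nat.cast_nonneg N)
      (one_le_mul_of_one_le_of_one_le (by linarith) (one_le_pow₀ hd))
  · have hBnorm : opNorm2 B ≤ C₀ + 1 := by
      have h := opNorm2_add_le (B - Bhat) Bhat
      rw [sub_add_cancel] at h
      linarith
    refine one_div_mul_le_of_le_mul (by positivity) ?_
    refine (sum_sq_iSup_abs_sub_le qs qi hC₀.le ht.le hB hBrow hBnorm hz01 hzhat01 hz hzhat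
      hinit).trans ?_
    gcongr
    linarith

/-- Fix a finite state space `S`, rates `q`, a constant `C₀ > 0` and a time
horizon `t > 0`.  There is a constant `C` (depending only on `S`, the rates, `C₀` and `t`) such
that for all `N`, all nonnegative `N×N` matrices `B, B̂` with row sums of `B` at most `C₀` and
`‖B̂‖₂ ≤ C₀`, and all `[0,1]`-valued solutions `z, ẑ` of the NIMFA systems for `B` resp. `B̂`
with identical initial conditions, one has
`(1/N)·Σ_i (sup_{0≤τ≤t} max_s |z_{i,s}(τ) − ẑ_{i,s}(τ)|)² ≤ C·‖B − B̂‖₂²`. -/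
theorem stmt_2 (S : Type) [Fintype S] [DecidableEq S] [Nonempty S]
    (qs : S → S → ℝ) (qi : S → S → S → ℝ)
    (hqs : ∀ s' s, s' ≠ s → 0 ≤ qs s' s)
    (hqsd : ∀ s, qs s s = -∑ s' ∈ Finset.univ \ {s}, qs s s')
    (hqi : ∀ st s' s, s' ≠ s → 0 ≤ qi st s' s)
    (hqid : ∀ st s, qi st s s = -∑ s' ∈ Finset.univ \ {s}, qi st s s')
    (C₀ t : ℝ) (hC₀ : 0 < C₀) (ht : 0 < t) :
    ∃ C : ℝ, 0 < C ∧
      ∀ (N : ℕ) (B Bhat : Matrix (Fin N) (Fin N) ℝ),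
        (∀ i j, 0 ≤ B i j) → (∀ i j, 0 ≤ Bhat i j) →
        (∀ i, ∑ j, B i j ≤ C₀) → opNorm2 Bhat ≤ C₀ →
        ∀ (z zhat : ℝ → Fin N → S → ℝ),
        -- the trajectories take values in [0,1]
        (∀ τ ∈ Set.Icc (0:ℝ) t, ∀ i s, z τ i s ∈ Set.Icc (0:ℝ) 1) →
        (∀ τ ∈ Set.Icc (0:ℝ) t, ∀ i s, zhat τ i s ∈ Set.Icc (0:ℝ) 1) →
        -- `z` solves NIMFA with matrix `B`, `zhat` solves NIMFA with matrix `Bhat`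
        (∀ τ ∈ Set.Icc (0:ℝ) t, ∀ i s,
          HasDerivAt (fun u => z u i s) (nimfaRHS qs qi B (z τ) i s) τ) →
        (∀ τ ∈ Set.Icc (0:ℝ) t, ∀ i s,
          HasDerivAt (fun u => zhat u i s) (nimfaRHS qs qi Bhat (zhat τ) i s) τ) →
        -- identical initial conditions
        (∀ i s, z 0 i s = zhat 0 i s) →
        (1 / N) * ∑ i,
            (⨆ τ : Set.Icc (0:ℝ) t, ⨆ s : S, |z τ i s - zhat τ i s|) ^ 2 ≤
          C * opNorm2 (B - Bhat) ^ 2 :=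
  stmt_2_general S qs qi C₀ t hC₀ ht
end

section
/- Let ẑ : [0,∞) → ([0,1]^S)^N be a solution of the NIMFA system with the stochastic block model matrix B̂. Then the block averages x_{k,s}(t) := (1/N_k)·Σ_{i ∈ I_k} ẑ_{i,s}(t) solve the BHMFA system (d/dt) x_{k,s}(t) = Σ_{s'∈S} q_{s'→s} x_{k,s'}(t) + Σ_{s',s̃∈S} q_{s̃;s'→s} x_{k,s'}(t)·Σ_{l=1}^{K} w_kl π_l x_{l,s̃}(t), with initial conditions x_{k,s}(0) = (1/N_k)·Σ_{i ∈ I_k} ẑ_{i,s}(0). (In particular, for any vector u ∈ ℝ^N and any i ∈ I_k, (B̂ u)_i = Σ_{l=1}^{K} w_kl π_l ū_l, where ū_l = (1/N_l)Σ_{j∈I_l} u_j, so (B̂u)_i depends only on the block k containing i.) -/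
open Finset

/-- Size of the `k`-th block of the partition given by `ι`. -/
def blockSize {K N : ℕ} (ι : Fin N → Fin K) (k : Fin K) : ℕ :=
  (Finset.univ.filter fun i => ι i = k).card

/-- Fraction `π_k = N_k / N` of vertices in the `k`-th block. -/
noncomputable def blockFrac {K N : ℕ} (ι : Fin N → Fin K) (k : Fin K) : ℝ :=
  (blockSize ι k : ℝ) / N

/-- The annealed matrix `B̂` whose entries are `B̂_ij = w_{kl}/N`
for `i ∈ I_k`, `j ∈ I_l` (including the diagonal). -/
noncomputable def Bhat {K N : ℕ} (ι : Fin N → Fin K)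
    (w : Fin K → Fin K → ℝ) : Matrix (Fin N) (Fin N) ℝ :=
  fun i j => w (ι i) (ι j) / N

/-- Right-hand side of the BHMFA (block homogeneous mean-field) ODE system:
`(d/dt) x_{k,s} = Σ_{s'} q_{s'→s} x_{k,s'} + Σ_{s',s̃} q_{s̃;s'→s} x_{k,s'}·Σ_l w_{kl} π_l x_{l,s̃}`. -/
def bhmfaRHS {S : Type*} [Fintype S] {K : ℕ} (qs : S → S → ℝ) (qi : S → S → S → ℝ)
    (w : Fin K → Fin K → ℝ) (π : Fin K → ℝ) (x : Fin K → S → ℝ) (k : Fin K) (s : S) : ℝ :=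
  (∑ s', qs s' s * x k s') +
    ∑ s', ∑ st, qi st s' s * x k s' * (∑ l, w k l * π l * x l st)

open Matrix

/-!
Since `B̂_ij` depends only on the blocks of `i` and `j`, `(B̂u)_i` only sees the block sums of `u`
and is the same for all `i ∈ I_k`. The NIMFA right-hand side at `i ∈ I_k` is therefore linear in
`z_i` with coefficients depending only on `k`, so it commutes with averaging over `I_k`, as does
differentiation.
-/

section BlockModel

variable {S : Type*} [Fintype S] {K N : ℕ}

noncomputable def blockAvg (ι : Fin N → Fin K) (u : Fin N → ℝ) (l : Fin K) : ℝ :=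
  (1 / (blockSize ι l : ℝ)) * ∑ j ∈ univ.filter fun j => ι j = l, u j

lemma blockSize_mul_blockAvg (ι : Fin N → Fin K) (u : Fin N → ℝ) (l : Fin K) :
    (blockSize ι l : ℝ) * blockAvg ι u l = ∑ j ∈ univ.filter fun j => ι j = l, u j := by
  rcases eq_or_ne (blockSize ι l) 0 with h | h
  · rw [blockSize, card_eq_zero] at h
    simp [blockAvg, h]
  · rw [blockAvg, ← mul_assoc, mul_one_div_cancel (by exact_mod_cast h), one_mul]

lemma Bhat_mulVec_apply (ι : Fin N → Fin K) (w : Fin K → Fin K → ℝ) (u : Fin N → ℝ)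
    (i : Fin N) :
    (Bhat ι w *ᵥ u) i = ∑ l, w (ι i) l * blockFrac ι l * blockAvg ι u l := by
  calc (Bhat ι w *ᵥ u) i
      = ∑ l, ∑ j ∈ univ.filter fun j => ι j = l, w (ι i) (ι j) / N * u j :=
        (sum_fiberwise univ ι _).symm
    _ = ∑ l, w (ι i) l / N * ∑ j ∈ univ.filter fun j => ι j = l, u j := by
        refine sum_congr rfl fun l _ => ?_
        rw [mul_sum]
        exact sum_congr rfl fun j hj => by rw [(mem_filter.mp hj).2]
    _ = ∑ l, w (ι i) l * blockFrac ι l * blockAvg ι u l := by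
        simp only [← blockSize_mul_blockAvg, blockFrac]
        exact sum_congr rfl fun l _ => by ring

lemma nimfaRHS_Bhat_of_mem (qs : S → S → ℝ) (qi : S → S → S → ℝ) (ι : Fin N → Fin K)
    (w : Fin K → Fin K → ℝ) (z : Fin N → S → ℝ) {i : Fin N} {k : Fin K} (hi : ι i = k)
    (s : S) :
    nimfaRHS qs qi (Bhat ι w) z i s =
      (∑ s', qs s' s * z i s') + ∑ s', ∑ st, qi st s' s * z i s' *
        ∑ l, w k l * blockFrac ι l * blockAvg ι (fun j => z j st) l := by
  simp only [nimfaRHS, ← hi, ← Bhat_mulVec_apply]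
  rfl

lemma mul_sum_linearRHS {ι' : Type*} (qs : S → S → ℝ) (qi : S → S → S → ℝ) (C : S → ℝ)
    (T : Finset ι') (c : ℝ) (z : ι' → S → ℝ) (s : S) :
    c * ∑ i ∈ T, ((∑ s', qs s' s * z i s') + ∑ s', ∑ st, qi st s' s * z i s' * C st) =
      (∑ s', qs s' s * (c * ∑ i ∈ T, z i s')) +
        ∑ s', ∑ st, qi st s' s * (c * ∑ i ∈ T, z i s') * C st := by
  rw [sum_add_distrib, mul_add]
  congr 1
  · simp only [mul_sum]
    rw [sum_comm]
    exact sum_congr rfl fun _ _ => sum_congr rfl fun _ _ => by ring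
  · simp only [mul_sum, sum_mul]
    rw [sum_comm]
    refine sum_congr rfl fun _ _ => ?_
    rw [sum_comm]
    exact sum_congr rfl fun _ _ => sum_congr rfl fun _ _ => by ring

end BlockModel

theorem stmt_4_general (S : Type) [Fintype S]
    (qs : S → S → ℝ) (qi : S → S → S → ℝ)
    (K N : ℕ) (ι : Fin N → Fin K) (w : Fin K → Fin K → ℝ)
    (zhat : ℝ → Fin N → S → ℝ)
    -- `ẑ` solves NIMFA with matrix `B̂` on `[0,∞)`
    (hode : ∀ τ : ℝ, 0 ≤ τ → ∀ i s,
      HasDerivAt (fun u => zhat u i s) (nimfaRHS qs qi (Bhat ι w) (zhat τ) i s) τ) :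
    -- `(B̂u)_i = Σ_l w_{kl} π_l ū_l` for `i ∈ I_k`
    (∀ (u : Fin N → ℝ) (i : Fin N),
      (Bhat ι w).mulVec u i =
        ∑ l, w (ι i) l * blockFrac ι l *
          ((1 / (blockSize ι l : ℝ)) * ∑ j ∈ Finset.univ.filter fun j => ι j = l, u j)) ∧
    -- the block averages solve the BHMFA system
    (∀ τ : ℝ, 0 ≤ τ → ∀ (k : Fin K) (s : S),
      HasDerivAt
        (fun u => (1 / (blockSize ι k : ℝ)) *
          ∑ i ∈ Finset.univ.filter fun i => ι i = k, zhat u i s)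
        (bhmfaRHS qs qi w (blockFrac ι)
          (fun l s' => (1 / (blockSize ι l : ℝ)) *
            ∑ i ∈ Finset.univ.filter fun i => ι i = l, zhat τ i s') k s)
        τ) := by
  refine ⟨Bhat_mulVec_apply ι w, fun τ hτ k s => ?_⟩
  have hsum := (HasDerivAt.fun_sum fun i (_ : i ∈ univ.filter fun i => ι i = k) =>
    hode τ hτ i s).const_mul (1 / (blockSize ι k : ℝ))
  refine hsum.congr_deriv ?_
  rw [sum_congr rfl fun i hi => nimfaRHS_Bhat_of_mem qs qi ι w (zhat τ) (mem_filter.mp hi).2 s,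
    mul_sum_linearRHS]
  rfl

/-- If `ẑ` solves the NIMFA system with the stochastic block model matrix `B̂`,
then the block averages `x_{k,s}(t) = (1/N_k)·Σ_{i∈I_k} ẑ_{i,s}(t)` solve the BHMFA system
(with initial conditions the block averages of `ẑ(0)`, which holds by definition).  In
particular, for any `u ∈ ℝ^N` and `i ∈ I_k`, `(B̂u)_i = Σ_l w_{kl} π_l ū_l` depends only on
the block `k` containing `i`. -/
theorem stmt_4 (S : Type) [Fintype S] [DecidableEq S] [Nonempty S]
    (qs : S → S → ℝ) (qi : S → S → S → ℝ)
    (hqs : ∀ s' s, s' ≠ s → 0 ≤ qs s' s)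
    (hqsd : ∀ s, qs s s = -∑ s' ∈ Finset.univ \ {s}, qs s s')
    (hqi : ∀ st s' s, s' ≠ s → 0 ≤ qi st s' s)
    (hqid : ∀ st s, qi st s s = -∑ s' ∈ Finset.univ \ {s}, qi st s s')
    (K N : ℕ) (ι : Fin N → Fin K) (w : Fin K → Fin K → ℝ)
    (hw : ∀ k l, w k l = w l k) (hwnn : ∀ k l, 0 ≤ w k l)
    (hblocks : ∀ k, 0 < blockSize ι k)
    (zhat : ℝ → Fin N → S → ℝ)
    -- `ẑ` solves NIMFA with matrix `B̂` on `[0,∞)`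
    (hode : ∀ τ : ℝ, 0 ≤ τ → ∀ i s,
      HasDerivAt (fun u => zhat u i s) (nimfaRHS qs qi (Bhat ι w) (zhat τ) i s) τ) :
    -- `(B̂u)_i = Σ_l w_{kl} π_l ū_l` for `i ∈ I_k`
    (∀ (u : Fin N → ℝ) (i : Fin N),
      (Bhat ι w).mulVec u i =
        ∑ l, w (ι i) l * blockFrac ι l *
          ((1 / (blockSize ι l : ℝ)) * ∑ j ∈ Finset.univ.filter fun j => ι j = l, u j)) ∧
    -- the block averages solve the BHMFA system
    (∀ τ : ℝ, 0 ≤ τ → ∀ (k : Fin K) (s : S),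
      HasDerivAt
        (fun u => (1 / (blockSize ι k : ℝ)) *
          ∑ i ∈ Finset.univ.filter fun i => ι i = k, zhat u i s)
        (bhmfaRHS qs qi w (blockFrac ι)
          (fun l s' => (1 / (blockSize ι l : ℝ)) *
            ∑ i ∈ Finset.univ.filter fun i => ι i = l, zhat τ i s') k s)
        τ) :=
  stmt_4_general S qs qi K N ι w zhat hode
end

section
/- Let N ≥ 1, let B be an N×N matrix with nonnegative entries, let Ĵ be the N×N matrix with all entries equal to 1/N, and let u, v ∈ [0,1]^N. Define φ_i = (Bv)_i, ū = (1/N)Σ_i u_i, v̄ = (1/N)Σ_i v_i, z̄_a(1) = (1/N)·Σ_{i=1}^{N} u_i·e^{−φ_i}, and x_a(1) = ū·e^{−v̄}. Then |z̄_a(1) − x_a(1)| ≥ e^{−v̄}·( (1/N)·uᵀ(B − Ĵ)v ) − (1/2)·‖B − Ĵ‖₂². -/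
/-!
Write `D = B - Ĵ` and `d = D v`, so that `(B v)_i = v̄ + d_i`. Expanding `e^{-x}` to first order
at `v̄ ≥ 0`, the remainder at `x = (B v)_i ≥ 0` lies between `0` and `d_i² / 2`: the lower bound
is convexity of `e^{-x}`, the upper one convexity of `x² / 2 - e^{-x}` on `[0, ∞)`. Weighting by
`u_i ∈ [0, 1]` and averaging gives `x_a(1) - z̄_a(1) ≥ e^{-v̄} (1/N) uᵀ d - (1/N) ‖d‖² / 2`, and
`‖d‖² ≤ ‖D‖₂² ‖v‖² ≤ N ‖D‖₂²`.
-/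

open Finset Matrix

open Real

lemma ConvexOn.add_mul_sub_le_of_hasDerivAt {S : Set ℝ} {f : ℝ → ℝ} {f' x y : ℝ}
    (hf : ConvexOn ℝ S f) (hx : x ∈ S) (hy : y ∈ S) (hd : HasDerivAt f f' x) :
    f x + f' * (y - x) ≤ f y := by
  rcases lt_trichotomy x y with hxy | rfl | hyx
  · have := hf.le_slope_of_hasDerivAt hx hy hxy hd
    rw [slope_def_field, le_div_iff₀ (sub_pos.2 hxy)] at this
    linarith
  · simp
  · have := hf.slope_le_of_hasDerivAt hy hx hyx hd
    rw [slope_def_field, div_le_iff₀ (sub_pos.2 hyx)] at this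
    linarith

lemma hasDerivAt_sq_div_two_sub_exp_neg (x : ℝ) :
    HasDerivAt (fun x => x ^ 2 / 2 - exp (-x)) (x + exp (-x)) x :=
  (((hasDerivAt_pow 2 x).div_const 2).sub (hasDerivAt_neg x).exp).congr_deriv (by norm_num)

lemma convexOn_sq_div_two_sub_exp_neg :
    ConvexOn ℝ (Set.Ici 0) (fun x : ℝ => x ^ 2 / 2 - exp (-x)) := by
  refine convexOn_of_hasDerivWithinAt2_nonneg (convex_Ici 0) (by fun_prop)
    (fun x _ => (hasDerivAt_sq_div_two_sub_exp_neg x).hasDerivWithinAt)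
    (f'' := fun x => 1 - exp (-x)) (fun x _ => ?_) (fun x hx => ?_)
  · exact ((hasDerivAt_id x).add (hasDerivAt_neg x).exp).hasDerivWithinAt.congr_deriv
      (by ring)
  · rw [interior_Ici, Set.mem_Ioi] at hx
    simpa using exp_le_one_iff.2 (neg_nonpos.2 hx.le)

lemma exp_neg_tangent_le (a b : ℝ) :
    exp (-b) * (1 - (a - b)) ≤ exp (-a) := by
  have h := mul_le_mul_of_nonneg_left (add_one_le_exp (b - a)) (exp_pos (-b)).le
  rw [← exp_add, show -b + (b - a) = -a by ring] at h
  linarith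

lemma exp_neg_sub_tangent_le_sq_div_two {a b : ℝ} (ha : 0 ≤ a) (hb : 0 ≤ b) :
    exp (-a) - exp (-b) * (1 - (a - b)) ≤ (a - b) ^ 2 / 2 := by
  have := convexOn_sq_div_two_sub_exp_neg.add_mul_sub_le_of_hasDerivAt hb ha
    (hasDerivAt_sq_div_two_sub_exp_neg b)
  linarith

lemma le_mul_exp_neg_sub_exp_neg {u a b : ℝ} (hu : u ∈ Set.Icc (0 : ℝ) 1) (ha : 0 ≤ a)
    (hb : 0 ≤ b) :
    u * (exp (-b) * (a - b)) - (a - b) ^ 2 / 2 ≤ u * (exp (-b) - exp (-a)) := by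
  have hR := sub_nonneg.2 (exp_neg_tangent_le a b)
  have := mul_le_of_le_one_left hR hu.2
  linarith [exp_neg_sub_tangent_le_sq_div_two ha hb]

lemma le_sum_mul_exp_neg_sub_sum_mul_exp_neg {ι : Type*} [Fintype ι] {u d : ι → ℝ} {b : ℝ}
    (hu : ∀ i, u i ∈ Set.Icc (0 : ℝ) 1) (hd : ∀ i, 0 ≤ b + d i) (hb : 0 ≤ b) :
    exp (-b) * (u ⬝ᵥ d) - (∑ i, d i ^ 2) / 2 ≤
      (∑ i, u i) * exp (-b) - ∑ i, u i * exp (-(b + d i)) :=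
  calc exp (-b) * (u ⬝ᵥ d) - (∑ i, d i ^ 2) / 2
      = ∑ i, (u i * (exp (-b) * (b + d i - b)) - (b + d i - b) ^ 2 / 2) := by
        simp only [dotProduct, mul_sum, sum_div, ← sum_sub_distrib]
        exact sum_congr rfl fun _ _ => by ring
    _ ≤ ∑ i, u i * (exp (-b) - exp (-(b + d i))) :=
        sum_le_sum fun i _ => le_mul_exp_neg_sub_exp_neg (hu i) (hd i) hb
    _ = (∑ i, u i) * exp (-b) - ∑ i, u i * exp (-(b + d i)) := by
        simp only [mul_sub, sum_sub_distrib, sum_mul]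

lemma sum_sq_mulVec_le_opNorm2_sq_mul {N : ℕ} (M : Matrix (Fin N) (Fin N) ℝ) (v : Fin N → ℝ) :
    ∑ i, (M *ᵥ v) i ^ 2 ≤ opNorm2 M ^ 2 * ∑ i, v i ^ 2 := by
  have h := (LinearMap.toContinuousLinearMap (toEuclideanLin M)).le_opNorm
    (WithLp.toLp 2 v)
  have hsq := pow_le_pow_left₀ (norm_nonneg _) h 2
  rwa [mul_pow, EuclideanSpace.real_norm_sq_eq, EuclideanSpace.real_norm_sq_eq] at hsq

lemma of_const_mulVec {N : ℕ} (c : ℝ) (v : Fin N → ℝ) :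
    (of fun _ _ => c : Matrix (Fin N) (Fin N) ℝ) *ᵥ v = fun _ => c * ∑ j, v j := by
  ext i
  simp [mulVec, dotProduct, mul_sum]

lemma mean_sq_mulVec_le_opNorm2_sq {N : ℕ} (M : Matrix (Fin N) (Fin N) ℝ) {v : Fin N → ℝ}
    (hv : ∀ i, v i ∈ Set.Icc (0 : ℝ) 1) :
    (1 / N) * ∑ i, (M *ᵥ v) i ^ 2 ≤ opNorm2 M ^ 2 := by
  have hv2 : ∑ i, v i ^ 2 ≤ N := by
    simpa using sum_le_sum fun i (_ : i ∈ univ) => pow_le_one₀ (hv i).1 (hv i).2 (n := 2)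
  calc (1 / N) * ∑ i, (M *ᵥ v) i ^ 2 ≤ (1 / N) * (opNorm2 M ^ 2 * N) := by
        gcongr
        exact (sum_sq_mulVec_le_opNorm2_sq_mul M v).trans (by gcongr)
    _ = opNorm2 M ^ 2 * (N / N) := by ring
    -- `N / N ≤ 1` also holds for `N = 0`, where `N / N = 0`.
    _ ≤ opNorm2 M ^ 2 := mul_le_of_le_one_right (by positivity) (div_self_le_one _)

theorem stmt_8_general (N : ℕ) (B : Matrix (Fin N) (Fin N) ℝ)
    (hB : ∀ i j, 0 ≤ B i j) (u v : Fin N → ℝ)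
    (hu : ∀ i, u i ∈ Set.Icc (0:ℝ) 1) (hv : ∀ i, v i ∈ Set.Icc (0:ℝ) 1) :
    Real.exp (-((1 / N) * ∑ i, v i)) *
        ((1 / N) * (u ⬝ᵥ (B - Matrix.of fun _ _ => (1 / N : ℝ)).mulVec v)) -
      (1 / 2) * opNorm2 (B - Matrix.of fun _ _ => (1 / N : ℝ)) ^ 2 ≤
    |(1 / N) * (∑ i, u i * Real.exp (-(B.mulVec v i))) -
      ((1 / N) * ∑ i, u i) * Real.exp (-((1 / N) * ∑ i, v i))| := by
  set D := B - of fun _ _ => (1 / N : ℝ)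
  set vbar := (1 / N : ℝ) * ∑ i, v i
  have hvbar : 0 ≤ vbar := mul_nonneg (by positivity) (sum_nonneg fun i _ => (hv i).1)
  have hBv : ∀ i, (B *ᵥ v) i = vbar + (D *ᵥ v) i := fun i => by
    simp [D, sub_mulVec, of_const_mulVec, vbar]
  have hBv_nonneg : ∀ i, 0 ≤ vbar + (D *ᵥ v) i := fun i => by
    rw [← hBv]
    exact dotProduct_nonneg_of_nonneg (hB i) fun j => (hv j).1
  have hsum := le_sum_mul_exp_neg_sub_sum_mul_exp_neg hu hBv_nonneg hvbar
  simp only [← hBv] at hsum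
  have hmean := mean_sq_mulVec_le_opNorm2_sq D hv
  rw [abs_sub_comm]
  refine le_trans ?_ (le_abs_self _)
  linarith [mul_le_mul_of_nonneg_left hsum (by positivity : (0 : ℝ) ≤ 1 / N)]

/-- The key deterministic inequality for the catalyst process: with
`φ_i = (Bv)_i`, `ū = (1/N)Σ u_i`, `v̄ = (1/N)Σ v_i`, `z̄_a(1) = (1/N)Σ_i u_i e^{−φ_i}` and
`x_a(1) = ū·e^{−v̄}`, one has
`|z̄_a(1) − x_a(1)| ≥ e^{−v̄}·((1/N)·uᵀ(B − Ĵ)v) − (1/2)·‖B − Ĵ‖₂²`,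
where `Ĵ` is the matrix with all entries `1/N`. -/
theorem stmt_8 (N : ℕ) (hN : 1 ≤ N) (B : Matrix (Fin N) (Fin N) ℝ)
    (hB : ∀ i j, 0 ≤ B i j) (u v : Fin N → ℝ)
    (hu : ∀ i, u i ∈ Set.Icc (0:ℝ) 1) (hv : ∀ i, v i ∈ Set.Icc (0:ℝ) 1) :
    Real.exp (-((1 / N) * ∑ i, v i)) *
        ((1 / N) * (u ⬝ᵥ (B - Matrix.of fun _ _ => (1 / N : ℝ)).mulVec v)) -
      (1 / 2) * opNorm2 (B - Matrix.of fun _ _ => (1 / N : ℝ)) ^ 2 ≤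
    |(1 / N) * (∑ i, u i * Real.exp (-(B.mulVec v i))) -
      ((1 / N) * ∑ i, u i) * Real.exp (-((1 / N) * ∑ i, v i))| :=
  stmt_8_general N B hB u v hu hv
end

section
/- Consider the degree process on the Erdős–Rényi graph at time 1 with all vertices initially in state a: the graph has N vertices with i.i.d. Bernoulli(ρ) edge indicators a_ij (1 ≤ i < j ≤ N), degrees δ_i = Σ_j a_ij and d = (N−1)ρ; conditionally on the graph, let ξ_1,…,ξ_N be independent Bernoulli variables with P(ξ_i = 1 | G) = e^{−δ_i/d}, and set ξ̄_a(1) = (1/N)·Σ_{i=1}^{N} ξ_i and x_a(1) = e^{−1}. Then there exist absolute constants c, C > 0 and thresholds d₀, N₀ such that for all N ≥ N₀ and all ρ with d₀ ≤ d ≤ N−1: c·max{1/d², 1/N} ≤ E[ (ξ̄_a(1) − e^{−1})² ] ≤ C·max{1/d², 1/N}; equivalently, ‖ξ̄_a(1) − x_a(1)‖ = Θ( max{1/d, 1/√N} ), where ‖X‖ = (E[X²])^{1/2}. -/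
open MeasureTheory ProbabilityTheory

/-- `A` is the adjacency matrix of an Erdős–Rényi graph with edge probability `p`:
symmetric `{0,1}` entries, empty diagonal, each off-diagonal entry Bernoulli(`p`),
independent over the pairs `i < j`. -/
def IsERGraph {Ω : Type} [MeasurableSpace Ω] (μ : Measure Ω) {N : ℕ}
    (A : Ω → Matrix (Fin N) (Fin N) ℝ) (p : ℝ) : Prop :=
  (∀ ω i j, A ω i j = A ω j i) ∧
  (∀ ω i, A ω i i = 0) ∧
  (∀ ω i j, A ω i j = 0 ∨ A ω i j = 1) ∧
  (∀ i j, Measurable fun ω => A ω i j) ∧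
  (∀ i j, i ≠ j → μ {ω | A ω i j = 1} = ENNReal.ofReal p) ∧
  iIndepFun
    (fun (e : {q : Fin N × Fin N // q.1 < q.2}) ω => A ω e.val.1 e.val.2) μ

/-- The σ-algebra generated by the random graph `A`. -/
def graphSigma {Ω : Type} {N : ℕ} (A : Ω → Matrix (Fin N) (Fin N) ℝ) :
    MeasurableSpace Ω :=
  MeasurableSpace.comap (fun ω => fun i j => A ω i j) inferInstance

/-!
Averaging the conditional moments over the graph, the first two moments of the `ξ i` are
`E[e^{-δ_i/d}]` and `E[e^{-(δ_i+δ_j)/d}]`. As `∑_{i ∈ T} δ_i = ∑_e |e ∩ T| a_e` with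
independent Bernoulli(`ρ`) edge indicators `a_e`, these factor over the edges into the Laplace
transform `L(s) = 1 - ρ + ρ e^{-s}` of Bernoulli(`ρ`): `m₁ = L(1/d)^(N-1)` and
`m₂ = L(2/d) L(1/d)^(2N-4)`. The mean square error is `(m₁ - e^{-1})² + (m₂ - m₁²) + (m₁ - m₂)/N`.
Since `(N-1)(1 - L(1/d)) = d(1 - e^{-1/d}) = 1 - 1/(2d) + O(1/d²)`, the bias `m₁ - e^{-1}` is
`O(1/d)`, and at least a constant times `1/d` when `ρ` is small, which `1/d² ≥ 1/N` forces; the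
covariance term is `O(1/d²)`, and `m₁ - m₂` stays between two positive constants.
-/

section Pairs

variable {ι : Type*} [LinearOrder ι]

theorem Fintype.sum_lt_pairs_eq_sum_sum_ite [Fintype ι] {M : Type*} [AddCommMonoid M]
    (g : ι → ι → M) :
    ∑ e : {q : ι × ι // q.1 < q.2}, g e.1.1 e.1.2 = ∑ i, ∑ j, if i < j then g i j else 0 := by
  rw [← Finset.sum_subtype (Finset.univ.filter fun q : ι × ι => q.1 < q.2) (by simp)
    fun q => g q.1 q.2, Finset.sum_filter, Fintype.sum_prod_type]

theorem Fintype.sum_sum_eq_sum_lt_pairs [Fintype ι] {M : Type*} [AddCommMonoid M]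
    (f : ι → ι → M) (hf : ∀ i, f i i = 0) :
    ∑ i, ∑ j, f i j = ∑ e : {q : ι × ι // q.1 < q.2}, (f e.1.1 e.1.2 + f e.1.2 e.1.1) := by
  rw [Finset.sum_add_distrib, sum_lt_pairs_eq_sum_sum_ite,
    sum_lt_pairs_eq_sum_sum_ite (fun i j => f j i),
    Finset.sum_comm (f := fun i j => if i < j then f j i else 0), ← Finset.sum_add_distrib]
  refine Finset.sum_congr rfl fun i _ => ?_
  rw [← Finset.sum_add_distrib]
  refine Finset.sum_congr rfl fun j _ => ?_
  rcases lt_trichotomy i j with h | rfl | h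
  · simp [h, h.not_gt]
  · simp [hf]
  · simp [h, h.not_gt]

def endpointsIn (T : Finset ι) (e : {q : ι × ι // q.1 < q.2}) : ℕ :=
  (if e.1.1 ∈ T then 1 else 0) + (if e.1.2 ∈ T then 1 else 0)

theorem sum_endpointsIn [Fintype ι] (T : Finset ι) :
    ∑ e, endpointsIn T e = T.card * (Fintype.card ι - 1) := by
  classical
  have h := Fintype.sum_sum_eq_sum_lt_pairs (fun i j : ι => if i ∈ T ∧ i ≠ j then 1 else 0)
    (by simp)
  have hrow : ∀ i, (∑ j, if i ∈ T ∧ i ≠ j then 1 else 0) =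
      if i ∈ T then Fintype.card ι - 1 else 0 := by
    intro i
    split_ifs with hi
    · simp only [hi, true_and, Finset.sum_boole, Finset.filter_ne, Finset.mem_univ,
        Finset.card_erase_of_mem, Finset.card_univ, Nat.cast_id]
    · simp [hi]
  simp only [hrow, Finset.sum_ite_mem, Finset.univ_inter, Finset.sum_const, smul_eq_mul] at h
  rw [h]
  refine Finset.sum_congr rfl fun e _ => ?_
  simp [endpointsIn, e.2.ne, e.2.ne']

theorem endpointsIn_singleton_le_one (i : ι) (e : {q : ι × ι // q.1 < q.2}) :
    endpointsIn {i} e ≤ 1 := by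
  have := e.2.ne
  unfold endpointsIn
  split_ifs <;> simp_all

theorem endpointsIn_pair_le_one {i j : ι} (hij : i < j) {e : {q : ι × ι // q.1 < q.2}}
    (he : e ≠ ⟨(i, j), hij⟩) : endpointsIn {i, j} e ≤ 1 := by
  have hlt := e.2
  unfold endpointsIn
  split_ifs with h₁ h₂ <;> norm_num
  refine he (Subtype.ext ?_)
  simp only [Finset.mem_insert, Finset.mem_singleton] at h₁ h₂
  rcases h₁ with h₁ | h₁ <;> rcases h₂ with h₂ | h₂ <;> rw [h₁, h₂] at hlt
  · exact absurd hlt (lt_irrefl _)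
  · exact Prod.ext h₁ h₂
  · exact (lt_asymm hij hlt).elim
  · exact absurd hlt (lt_irrefl _)

end Pairs

theorem Finset.prod_comp_eq_pow_sum_of_le_one {ι M : Type*} [CommMonoid M] (s : Finset ι)
    {c : ι → ℕ} (hc : ∀ i ∈ s, c i ≤ 1) {g : ℕ → M} (hg : g 0 = 1) :
    ∏ i ∈ s, g (c i) = g 1 ^ ∑ i ∈ s, c i := by
  rw [← Finset.prod_pow_eq_pow_sum]
  refine Finset.prod_congr rfl fun i hi => ?_
  have := hc i hi
  interval_cases c i <;> simp [hg]

noncomputable def bernoulliLaplace (ρ s : ℝ) : ℝ := 1 - ρ + ρ * Real.exp (-s)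

theorem bernoulliLaplace_zero (ρ : ℝ) : bernoulliLaplace ρ 0 = 1 := by
  simp [bernoulliLaplace]

theorem integral_comp_of_bernoulli {Ω : Type*} [MeasurableSpace Ω] {μ : Measure Ω}
    [IsProbabilityMeasure μ] {X : Ω → ℝ} (hX01 : ∀ ω, X ω = 0 ∨ X ω = 1) (hX : Measurable X)
    {ρ : ℝ} (hρ : 0 ≤ ρ) (hX1 : μ {ω | X ω = 1} = ENNReal.ofReal ρ) (φ : ℝ → ℝ) :
    ∫ ω, φ (X ω) ∂μ = (1 - ρ) * φ 0 + ρ * φ 1 := by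
  have hS : MeasurableSet {ω | X ω = 1} := hX (measurableSet_singleton 1)
  have hφX : (fun ω => φ (X ω)) =
      fun ω => φ 0 + (φ 1 - φ 0) * {ω | X ω = 1}.indicator 1 ω := by
    funext ω
    rcases hX01 ω with h | h <;> simp [h]
  rw [hφX, integral_add (integrable_const _) ((integrable_indicator_iff hS).2
      (integrable_const 1).integrableOn |>.const_mul _), integral_const_mul,
    integral_indicator_one hS, measureReal_def, hX1, ENNReal.toReal_ofReal hρ]
  simp
  ring

theorem graphSigma_le {Ω : Type} [MeasurableSpace Ω] {N : ℕ}
    {A : Ω → Matrix (Fin N) (Fin N) ℝ} (hA : ∀ i j, Measurable fun ω => A ω i j) :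
    graphSigma A ≤ ‹MeasurableSpace Ω› :=
  (measurable_pi_lambda _ fun i => measurable_pi_lambda _ fun j => hA i j).comap_le

section ErdosRenyi

variable {Ω : Type} [MeasurableSpace Ω] {μ : Measure Ω} {N : ℕ}
  {A : Ω → Matrix (Fin N) (Fin N) ℝ} {ρ : ℝ}

theorem IsERGraph.sum_degree_eq (hER : IsERGraph μ A ρ) (T : Finset (Fin N)) (ω : Ω) :
    ∑ i ∈ T, ∑ j, A ω i j = ∑ e, (endpointsIn T e : ℝ) * A ω e.1.1 e.1.2 := by
  have h := Fintype.sum_sum_eq_sum_lt_pairs (fun i j => if i ∈ T then A ω i j else 0)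
    (by simp [hER.2.1])
  simp only [← Finset.ite_sum_zero, Finset.sum_ite_mem, Finset.univ_inter] at h
  rw [h]
  refine Finset.sum_congr rfl fun e _ => ?_
  rw [hER.1 ω e.1.2 e.1.1, endpointsIn]
  split_ifs <;> push_cast <;> ring

theorem IsERGraph.integral_prod_exp_neg_degree [IsProbabilityMeasure μ]
    (hER : IsERGraph μ A ρ) (hρ : 0 ≤ ρ) (T : Finset (Fin N)) (d : ℝ) :
    ∫ ω, ∏ i ∈ T, Real.exp (-(∑ j, A ω i j) / d) ∂μ =
      ∏ e, bernoulliLaplace ρ (endpointsIn T e / d) := by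
  have hprod : ∀ ω, ∏ i ∈ T, Real.exp (-(∑ j, A ω i j) / d) =
      ∏ e, Real.exp (-(endpointsIn T e / d) * A ω e.1.1 e.1.2) := by
    intro ω
    rw [← Real.exp_sum, ← Real.exp_sum, ← Finset.sum_div, Finset.sum_neg_distrib,
      hER.sum_degree_eq, neg_div, Finset.sum_div, ← Finset.sum_neg_distrib]
    exact congrArg _ (Finset.sum_congr rfl fun e _ => by ring)
  obtain ⟨-, -, h01, hmeas, hP, hindep⟩ := hER
  simp_rw [hprod]
  rw [hindep.integral_fun_prod_comp (fun e => (hmeas _ _).aemeasurable) fun e =>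
    (by fun_prop : Continuous fun y : ℝ => Real.exp (-(endpointsIn T e / d) * y))
      |>.aestronglyMeasurable]
  refine Finset.prod_congr rfl fun e _ => ?_
  refine (integral_comp_of_bernoulli (fun ω => h01 ω _ _) (hmeas _ _) hρ (hP _ _ e.2.ne)
    fun y => Real.exp (-(endpointsIn T e / d) * y)).trans ?_
  simp [bernoulliLaplace]

theorem IsERGraph.integral_exp_neg_degree [IsProbabilityMeasure μ]
    (hER : IsERGraph μ A ρ) (hρ : 0 ≤ ρ) (i : Fin N) (d : ℝ) :
    ∫ ω, Real.exp (-(∑ j, A ω i j) / d) ∂μ = bernoulliLaplace ρ (1 / d) ^ (N - 1) := by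
  have h := hER.integral_prod_exp_neg_degree hρ {i} d
  simp only [Finset.prod_singleton] at h
  rw [h, Finset.prod_comp_eq_pow_sum_of_le_one (g := fun k : ℕ => bernoulliLaplace ρ (k / d))
    Finset.univ (fun e _ => endpointsIn_singleton_le_one i e) (by simp [bernoulliLaplace_zero]),
    sum_endpointsIn]
  simp

theorem IsERGraph.integral_exp_neg_degree_mul [IsProbabilityMeasure μ]
    (hER : IsERGraph μ A ρ) (hρ : 0 ≤ ρ) {i j : Fin N} (hij : i < j) (d : ℝ) :
    ∫ ω, Real.exp (-(∑ k, A ω i k) / d) * Real.exp (-(∑ k, A ω j k) / d) ∂μ =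
      bernoulliLaplace ρ (2 / d) * bernoulliLaplace ρ (1 / d) ^ (2 * N - 4) := by
  set e₀ : {q : Fin N × Fin N // q.1 < q.2} := ⟨(i, j), hij⟩
  have h := hER.integral_prod_exp_neg_degree hρ {i, j} d
  simp only [Finset.prod_pair hij.ne] at h
  have he₀ : endpointsIn {i, j} e₀ = 2 := by simp [endpointsIn, e₀]
  have hsum := sum_endpointsIn (ι := Fin N) {i, j}
  rw [← Finset.add_sum_erase _ _ (Finset.mem_univ e₀), he₀, Finset.card_pair hij.ne,
    Fintype.card_fin] at hsum
  rw [h, ← Finset.mul_prod_erase _ _ (Finset.mem_univ e₀), he₀,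
    Finset.prod_comp_eq_pow_sum_of_le_one (g := fun k : ℕ => bernoulliLaplace ρ (k / d)) _
      (fun e he => endpointsIn_pair_le_one hij (Finset.ne_of_mem_erase he))
      (by simp [bernoulliLaplace_zero]),
    show ∑ e ∈ Finset.univ.erase e₀, endpointsIn {i, j} e = 2 * N - 4 by omega]
  simp only [Nat.cast_one, Nat.cast_ofNat]

end ErdosRenyi

section IndicatorAverage

variable {Ω ι : Type*} [MeasurableSpace Ω] {μ : Measure Ω} {ξ : Ω → ι → ℝ}

theorem integrable_of_mem_zero_one [IsFiniteMeasure μ] (h01 : ∀ ω i, ξ ω i = 0 ∨ ξ ω i = 1)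
    (hξ : ∀ i, Measurable fun ω => ξ ω i) (i : ι) :
    Integrable (fun ω => ξ ω i) μ :=
  .of_mem_Icc 0 1 (hξ i).aemeasurable <| .of_forall fun ω => by
    rcases h01 ω i with h | h <;> simp [h]

theorem integrable_mul_of_mem_zero_one [IsFiniteMeasure μ]
    (h01 : ∀ ω i, ξ ω i = 0 ∨ ξ ω i = 1) (hξ : ∀ i, Measurable fun ω => ξ ω i) (i j : ι) :
    Integrable (fun ω => ξ ω i * ξ ω j) μ :=
  .of_mem_Icc 0 1 ((hξ i).mul (hξ j)).aemeasurable <| .of_forall fun ω => by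
    rcases h01 ω i with h | h <;> rcases h01 ω j with h' | h' <;> simp [h, h']

theorem integral_sum_sq_of_mem_zero_one [IsFiniteMeasure μ] [Fintype ι]
    (h01 : ∀ ω i, ξ ω i = 0 ∨ ξ ω i = 1) (hξ : ∀ i, Measurable fun ω => ξ ω i) {m₁ m₂ : ℝ}
    (h₁ : ∀ i, ∫ ω, ξ ω i ∂μ = m₁) (h₂ : ∀ i j, i ≠ j → ∫ ω, ξ ω i * ξ ω j ∂μ = m₂) :
    ∫ ω, (∑ i, ξ ω i) ^ 2 ∂μ = Fintype.card ι * (m₁ + (Fintype.card ι - 1) * m₂) := by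
  classical
  have hmixed : ∀ i j, ∫ ω, ξ ω i * ξ ω j ∂μ = m₂ + if i = j then m₁ - m₂ else 0 := by
    intro i j
    split_ifs with hij
    · subst hij
      have hidem : ∀ ω, ξ ω i * ξ ω i = ξ ω i := fun ω => by
        rcases h01 ω i with h | h <;> simp [h]
      simp only [hidem, h₁]
      ring
    · rw [h₂ i j hij, add_zero]
  simp_rw [sq, Finset.sum_mul_sum]
  rw [integral_finsetSum _ fun i _ => integrable_finsetSum _ fun j _ =>
    integrable_mul_of_mem_zero_one h01 hξ i j]
  simp_rw [integral_finsetSum _ fun j _ => integrable_mul_of_mem_zero_one h01 hξ _ j, hmixed,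
    Finset.sum_add_distrib, Finset.sum_ite_eq, Finset.mem_univ, if_true, Finset.sum_const,
    Finset.card_univ, nsmul_eq_mul]
  ring

theorem integral_sq_average_sub [IsProbabilityMeasure μ] [Fintype ι] [Nonempty ι]
    (h01 : ∀ ω i, ξ ω i = 0 ∨ ξ ω i = 1) (hξ : ∀ i, Measurable fun ω => ξ ω i) {m₁ m₂ : ℝ}
    (h₁ : ∀ i, ∫ ω, ξ ω i ∂μ = m₁) (h₂ : ∀ i j, i ≠ j → ∫ ω, ξ ω i * ξ ω j ∂μ = m₂) (a : ℝ) :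
    ∫ ω, ((1 / (Fintype.card ι : ℝ)) * ∑ i, ξ ω i - a) ^ 2 ∂μ =
      (m₁ - a) ^ 2 + (m₂ - m₁ ^ 2) + (m₁ - m₂) / Fintype.card ι := by
  set n : ℝ := (Fintype.card ι : ℝ)
  have hn : n ≠ 0 := by positivity
  have hS : Integrable (fun ω => ∑ i, ξ ω i) μ :=
    integrable_finsetSum _ fun i _ => integrable_of_mem_zero_one h01 hξ i
  have hS2 : Integrable (fun ω => (∑ i, ξ ω i) ^ 2) μ := by
    simp_rw [sq, Finset.sum_mul_sum]
    exact integrable_finsetSum _ fun i _ => integrable_finsetSum _ fun j _ =>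
      integrable_mul_of_mem_zero_one h01 hξ i j
  have hexpand : ∀ ω, ((1 / n) * ∑ i, ξ ω i - a) ^ 2 =
      (1 / n ^ 2) * (∑ i, ξ ω i) ^ 2 - (2 * a / n) * ∑ i, ξ ω i + a ^ 2 := fun ω => by ring
  simp_rw [hexpand]
  rw [integral_add (f := fun ω => 1 / n ^ 2 * (∑ i, ξ ω i) ^ 2 - 2 * a / n * ∑ i, ξ ω i)
      ((hS2.const_mul _).sub (hS.const_mul _)) (integrable_const _),
    integral_sub (hS2.const_mul _) (hS.const_mul _), integral_const_mul, integral_const_mul,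
    integral_sum_sq_of_mem_zero_one h01 hξ h₁ h₂,
    integral_finsetSum _ fun i _ => integrable_of_mem_zero_one h01 hξ i]
  simp only [h₁, Finset.sum_const, Finset.card_univ, nsmul_eq_mul, integral_const, probReal_univ,
    smul_eq_mul, one_mul]
  field_simp
  ring

end IndicatorAverage

namespace Real

theorem exp_sub_exp_le_of_le_of_nonpos {u v : ℝ} (huv : u ≤ v) (hv : v ≤ 0) :
    exp v - exp u ≤ v - u := by
  have h₁ : 1 - exp (u - v) ≤ v - u := by linarith [add_one_le_exp (u - v)]
  have h₂ : 0 ≤ 1 - exp (u - v) := by linarith [exp_le_one_iff.2 (sub_nonpos.2 huv)]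
  calc exp v - exp u = exp v * (1 - exp (u - v)) := by rw [mul_sub, ← exp_add]; ring_nf
    _ ≤ 1 * (v - u) := mul_le_mul (exp_le_one_iff.2 hv) h₁ h₂ zero_le_one
    _ = v - u := one_mul _

theorem abs_exp_neg_sub_quadratic_le {t : ℝ} (ht₀ : 0 ≤ t) (ht₁ : t ≤ 1) :
    |exp (-t) - (1 - t + t ^ 2 / 2)| ≤ 2 / 9 * t ^ 3 := by
  have h := exp_bound (x := -t) (by rwa [abs_neg, abs_of_nonneg ht₀]) (n := 3) (by norm_num)
  norm_num [Finset.sum_range_succ, Nat.factorial, abs_of_nonneg ht₀] at h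
  rw [show 1 - t + t ^ 2 / 2 = 1 + -t + t ^ 2 / 2 by ring]
  linarith

theorem one_sub_pow_le_exp_neg_mul {x : ℝ} (hx : x ≤ 1) (n : ℕ) :
    (1 - x) ^ n ≤ exp (-(n * x)) := by
  rw [neg_mul_eq_mul_neg, exp_nat_mul]
  exact pow_le_pow_left₀ (sub_nonneg.2 hx) (one_sub_le_exp_neg x) n

theorem exp_neg_mul_le_one_sub_pow {x : ℝ} (hx : x ≤ 1 / 2) (n : ℕ) :
    exp (-(n * (x * (1 + 2 * x)))) ≤ (1 - x) ^ n := by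
  have hy := add_one_le_exp (x * (1 + 2 * x))
  have hbase : exp (-(x * (1 + 2 * x))) ≤ 1 - x := by
    rw [exp_neg, inv_le_comm₀ (exp_pos _) (by linarith)]
    refine le_trans ?_ hy
    rw [inv_le_iff_one_le_mul₀ (by linarith)]
    nlinarith [mul_nonneg (sq_nonneg x) (by linarith : (0 : ℝ) ≤ 1 - 2 * x)]
  rw [neg_mul_eq_mul_neg, exp_nat_mul]
  exact pow_le_pow_left₀ (exp_pos _).le hbase n

end Real

section Analysis

open Real

theorem bernoulliLaplace_two_mul_sub_sq (ρ s : ℝ) :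
    bernoulliLaplace ρ (2 * s) - bernoulliLaplace ρ s ^ 2 =
      ρ * (1 - ρ) * (1 - exp (-s)) ^ 2 := by
  rw [bernoulliLaplace, bernoulliLaplace, show -(2 * s) = -s + -s by ring, exp_add]
  ring

theorem mul_one_sub_bernoulliLaplace_mem_Icc {n ρ t : ℝ} (ht : 0 ≤ t) (ht₁ : t ≤ 1 / 16)
    (hnρt : n * ρ * t = 1) :
    n * (1 - bernoulliLaplace ρ t) ∈ Set.Icc (1 - 0.6 * t) (1 - 0.4 * t) := by
  have hc : 0 ≤ n * ρ := by
    by_contra! h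
    nlinarith
  have hexp := abs_le.1 (abs_exp_neg_sub_quadratic_le ht (by linarith))
  have hcube : 2 / 9 * t ^ 3 ≤ 0.1 * t ^ 2 := by nlinarith [sq_nonneg t]
  have hlo := mul_le_mul_of_nonneg_left
    (show t - t ^ 2 / 2 - 0.1 * t ^ 2 ≤ 1 - exp (-t) by linarith) hc
  have hhi := mul_le_mul_of_nonneg_left
    (show 1 - exp (-t) ≤ t - t ^ 2 / 2 + 0.1 * t ^ 2 by linarith) hc
  rw [show n * (1 - bernoulliLaplace ρ t) = n * ρ * (1 - exp (-t)) by unfold bernoulliLaplace; ring]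
  constructor <;> nlinarith

theorem abs_one_sub_pow_sub_exp_neg_one_le {x t : ℝ} {n : ℕ} (hx : 0 ≤ x) (hxt : x ≤ t)
    (ht : t ≤ 1 / 16) (hnx : n * x ∈ Set.Icc (1 - 0.6 * t) 1) :
    |(1 - x) ^ n - exp (-1)| ≤ 2 * t := by
  have hup : (1 - x) ^ n - exp (-1) ≤ 0.6 * t := by
    have h₁ := one_sub_pow_le_exp_neg_mul (show x ≤ 1 by linarith) n
    have h₂ := exp_le_exp.2 (show -(n * x) ≤ -1 + 0.6 * t by linarith [hnx.1])
    have h₃ := exp_sub_exp_le_of_le_of_nonpos (show (-1 : ℝ) ≤ -1 + 0.6 * t by linarith)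
      (by linarith)
    linarith
  have hlow : exp (-1) - (1 - x) ^ n ≤ 2 * t := by
    have h₁ := exp_neg_mul_le_one_sub_pow (show x ≤ 1 / 2 by linarith) n
    have hnxx : n * (x * (1 + 2 * x)) ≤ 1 + 2 * t := by
      have : (n * x) * x ≤ 1 * t := mul_le_mul hnx.2 hxt hx zero_le_one
      linarith [hnx.2, show n * (x * (1 + 2 * x)) = n * x + 2 * (n * x * x) by ring]
    have h₂ := exp_le_exp.2 (show -1 - 2 * t ≤ -(n * (x * (1 + 2 * x))) by linarith)
    have h₃ := exp_sub_exp_le_of_le_of_nonpos (show -1 - 2 * t ≤ -1 by linarith) (by norm_num)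
    linarith
  exact abs_le.2 ⟨by linarith, by linarith⟩

theorem le_one_sub_pow_sub_exp_neg_one {x t : ℝ} {n : ℕ} (hx : 0 ≤ x) (hxt : x ≤ t / 20)
    (ht : t ≤ 1 / 16) (hnx : n * x ≤ 1 - 0.4 * t) :
    0.1 * t ≤ (1 - x) ^ n - exp (-1) := by
  have h₁ := exp_neg_mul_le_one_sub_pow (show x ≤ 1 / 2 by linarith) n
  have hnx₀ : 0 ≤ n * x := by positivity
  have hnxx : n * (x * (1 + 2 * x)) ≤ 1 - 0.3 * t := by
    have : (n * x) * x ≤ 1 * (t / 20) := mul_le_mul (by linarith) hxt hx zero_le_one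
    nlinarith
  have h₂ := exp_le_exp.2 (show -1 + 0.3 * t ≤ -(n * (x * (1 + 2 * x))) by linarith)
  have h₃ : exp (-1) * (1 + 0.3 * t) ≤ exp (-1 + 0.3 * t) := by
    rw [exp_add]
    exact mul_le_mul_of_nonneg_left (by linarith [add_one_le_exp (0.3 * t)]) (exp_pos _).le
  nlinarith [exp_neg_one_gt_d9]

theorem one_sub_bernoulliLaplace_mem_Icc {ρ t : ℝ} (hρ : 0 ≤ ρ) (ht : 0 ≤ t) :
    1 - bernoulliLaplace ρ t ∈ Set.Icc 0 (ρ * t) := by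
  have h₁ : 0 ≤ 1 - exp (-t) := by linarith [exp_le_one_iff.2 (neg_nonpos.2 ht)]
  have h₂ : 1 - exp (-t) ≤ t := by linarith [one_sub_le_exp_neg t]
  rw [bernoulliLaplace, show 1 - (1 - ρ + ρ * exp (-t)) = ρ * (1 - exp (-t)) by ring]
  exact ⟨mul_nonneg hρ h₁, mul_le_mul_of_nonneg_left h₂ hρ⟩

theorem bernoulliLaplace_mem_Icc {ρ t : ℝ} (hρ : 0 ≤ ρ) (hρ₁ : ρ ≤ 1) (ht : 0 ≤ t) :
    bernoulliLaplace ρ t ∈ Set.Icc 0 1 := by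
  have := exp_le_one_iff.2 (neg_nonpos.2 ht)
  unfold bernoulliLaplace
  exact ⟨by nlinarith [exp_pos (-t)], by nlinarith⟩

theorem bernoulliLaplace_anti {ρ s t : ℝ} (hρ : 0 ≤ ρ) (hst : s ≤ t) :
    bernoulliLaplace ρ t ≤ bernoulliLaplace ρ s := by
  unfold bernoulliLaplace
  nlinarith [exp_le_exp.2 (neg_le_neg hst)]

section DegreeMoments

variable {n : ℕ} {ρ t : ℝ}

theorem abs_bernoulliLaplace_pow_sub_exp_neg_one_le (hρ : 0 ≤ ρ) (hρ₁ : ρ ≤ 1) (ht : 0 ≤ t)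
    (ht₁ : t ≤ 1 / 16) (hnρt : n * ρ * t = 1) :
    |bernoulliLaplace ρ t ^ n - exp (-1)| ≤ 2 * t := by
  obtain ⟨hx₀, hx⟩ := one_sub_bernoulliLaplace_mem_Icc hρ ht
  obtain ⟨hnx₀, hnx₁⟩ := mul_one_sub_bernoulliLaplace_mem_Icc ht ht₁ hnρt
  have := abs_one_sub_pow_sub_exp_neg_one_le hx₀ (hx.trans (mul_le_of_le_one_left ht hρ₁)) ht₁
    ⟨hnx₀, by linarith⟩ (n := n)
  rwa [sub_sub_cancel] at this

theorem le_bernoulliLaplace_pow_sub_exp_neg_one (hρ : 0 ≤ ρ) (hρ₁ : ρ ≤ 1 / 20) (ht : 0 ≤ t)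
    (ht₁ : t ≤ 1 / 16) (hnρt : n * ρ * t = 1) :
    0.1 * t ≤ bernoulliLaplace ρ t ^ n - exp (-1) := by
  obtain ⟨hx₀, hx⟩ := one_sub_bernoulliLaplace_mem_Icc hρ ht
  have := le_one_sub_pow_sub_exp_neg_one hx₀ (by nlinarith) ht₁
    (mul_one_sub_bernoulliLaplace_mem_Icc ht ht₁ hnρt).2 (n := n)
  rwa [sub_sub_cancel] at this

theorem bernoulliLaplace_mul_pow_sub_sq_mem_Icc (hn : 1 ≤ n) (hρ : 0 ≤ ρ) (hρ₁ : ρ ≤ 1)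
    (ht : 0 ≤ t) :
    bernoulliLaplace ρ (2 * t) * bernoulliLaplace ρ t ^ (2 * n - 2) - (bernoulliLaplace ρ t ^ n) ^ 2
      ∈ Set.Icc 0 (t ^ 2) := by
  obtain ⟨hL₀, hL₁⟩ := bernoulliLaplace_mem_Icc hρ hρ₁ ht
  have hsplit : (bernoulliLaplace ρ t ^ n) ^ 2 =
      bernoulliLaplace ρ t ^ (2 * n - 2) * bernoulliLaplace ρ t ^ 2 := by
    rw [← pow_mul, ← pow_add]; congr 1; omega
  have hcov : 0 ≤ ρ * (1 - ρ) * (1 - exp (-t)) ^ 2 := by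
    have : 0 ≤ 1 - ρ := by linarith
    positivity
  have hcov₁ : ρ * (1 - ρ) * (1 - exp (-t)) ^ 2 ≤ t ^ 2 := by
    have h₁ : 0 ≤ 1 - exp (-t) := by linarith [exp_le_one_iff.2 (neg_nonpos.2 ht)]
    have h₂ : 1 - exp (-t) ≤ t := by linarith [one_sub_le_exp_neg t]
    have h₃ : (1 - exp (-t)) ^ 2 ≤ t ^ 2 := pow_le_pow_left₀ h₁ h₂ 2
    have hρρ : ρ * (1 - ρ) ≤ 1 := by nlinarith
    nlinarith [mul_le_mul_of_nonneg_right hρρ (sq_nonneg (1 - exp (-t)))]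
  have hpow₀ := pow_nonneg hL₀ (2 * n - 2)
  have hpow₁ := pow_le_one₀ hL₀ hL₁ (n := 2 * n - 2)
  rw [hsplit, ← mul_comm (bernoulliLaplace ρ t ^ (2 * n - 2)), ← mul_sub,
    bernoulliLaplace_two_mul_sub_sq]
  exact ⟨mul_nonneg hpow₀ hcov, by nlinarith⟩

theorem bernoulliLaplace_pow_sub_mul_pow_mem_Icc (hn : 2 ≤ n) (hρ : 0 ≤ ρ) (hρ₁ : ρ ≤ 1)
    (ht : 0 ≤ t) (ht₁ : t ≤ 1 / 16) (hnρt : n * ρ * t = 1) :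
    bernoulliLaplace ρ t ^ n - bernoulliLaplace ρ (2 * t) * bernoulliLaplace ρ t ^ (2 * n - 2)
      ∈ Set.Icc 0.1 1 := by
  obtain ⟨hL₀, hL₁⟩ := bernoulliLaplace_mem_Icc hρ hρ₁ ht
  obtain ⟨hL₂₀, -⟩ := bernoulliLaplace_mem_Icc hρ hρ₁ (by linarith : 0 ≤ 2 * t)
  obtain ⟨hx₀, hx⟩ := one_sub_bernoulliLaplace_mem_Icc hρ ht
  have hnx := (mul_one_sub_bernoulliLaplace_mem_Icc ht ht₁ hnρt).1
  have hbias := abs_le.1 (abs_bernoulliLaplace_pow_sub_exp_neg_one_le hρ hρ₁ ht ht₁ hnρt)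
  have hhalf : bernoulliLaplace ρ t ^ (n - 1) ≤ 1 / 2 := by
    have h₁ := one_sub_pow_le_exp_neg_mul (x := 1 - bernoulliLaplace ρ t) (by linarith) (n - 1)
    rw [sub_sub_cancel, Nat.cast_sub (by omega), Nat.cast_one] at h₁
    have h₂ : exp (-((n - 1) * (1 - bernoulliLaplace ρ t))) ≤ exp (-0.9) :=
      exp_le_exp.2 (by nlinarith [mul_le_of_le_one_left ht hρ₁])
    have h₃ : 2 ≤ exp 0.9 := by nlinarith [quadratic_le_exp_of_nonneg (x := 0.9) (by norm_num)]
    have h₄ : (exp 0.9)⁻¹ ≤ 1 / 2 := by rw [inv_le_comm₀ (exp_pos _) (by norm_num)]; linarith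
    linarith [exp_neg 0.9]
  have hm₂ : bernoulliLaplace ρ (2 * t) * bernoulliLaplace ρ t ^ (2 * n - 2) ≤
      bernoulliLaplace ρ t ^ n * bernoulliLaplace ρ t ^ (n - 1) := by
    calc bernoulliLaplace ρ (2 * t) * bernoulliLaplace ρ t ^ (2 * n - 2)
        ≤ bernoulliLaplace ρ t * bernoulliLaplace ρ t ^ (2 * n - 2) :=
          mul_le_mul_of_nonneg_right (bernoulliLaplace_anti hρ (by linarith)) (pow_nonneg hL₀ _)
      _ = bernoulliLaplace ρ t ^ n * bernoulliLaplace ρ t ^ (n - 1) := by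
          rw [← pow_succ', ← pow_add]; congr 1; omega
  have hm₁ : bernoulliLaplace ρ t ^ n ≤ 1 := pow_le_one₀ hL₀ hL₁
  constructor
  · nlinarith [exp_neg_one_gt_d9, pow_nonneg hL₀ n]
  · nlinarith [pow_nonneg hL₀ (2 * n - 2)]

end DegreeMoments

theorem bias_variance_bounds {N : ℕ} {ρ d : ℝ} (hN : 10000 ≤ N) (hρ : 0 ≤ ρ) (hρ₁ : ρ ≤ 1)
    (hd : ((N : ℝ) - 1) * ρ = d) (hd₁₆ : 16 ≤ d) {m₁ m₂ : ℝ}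
    (hm₁ : m₁ = bernoulliLaplace ρ (1 / d) ^ (N - 1))
    (hm₂ : m₂ = bernoulliLaplace ρ (2 / d) * bernoulliLaplace ρ (1 / d) ^ (2 * N - 4)) :
    0.01 * max (1 / d ^ 2) (1 / (N : ℝ)) ≤ (m₁ - exp (-1)) ^ 2 + (m₂ - m₁ ^ 2) + (m₁ - m₂) / N ∧
      (m₁ - exp (-1)) ^ 2 + (m₂ - m₁ ^ 2) + (m₁ - m₂) / N ≤ 6 * max (1 / d ^ 2) (1 / (N : ℝ)) := by
  set t := 1 / d with htd
  have ht : 0 ≤ t := by positivity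
  have ht₁ : t ≤ 1 / 16 := by rw [htd]; gcongr
  have hNR : (10000 : ℝ) ≤ N := by exact_mod_cast hN
  have hcast : ((N - 1 : ℕ) : ℝ) = N - 1 := by rw [Nat.cast_sub (by omega), Nat.cast_one]
  have hnρt : ((N - 1 : ℕ) : ℝ) * ρ * t = 1 := by
    rw [hcast, hd, htd]; field_simp
  rw [show 2 / d = 2 * t by rw [htd]; ring, show 2 * N - 4 = 2 * (N - 1) - 2 by omega] at hm₂
  rw [show 1 / d ^ 2 = t ^ 2 by rw [htd]; ring]
  have hbias := abs_le.1 (hm₁ ▸ abs_bernoulliLaplace_pow_sub_exp_neg_one_le hρ hρ₁ ht ht₁ hnρt)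
  obtain ⟨hcov₀, hcov₁⟩ := hm₁ ▸ hm₂ ▸ bernoulliLaplace_mul_pow_sub_sq_mem_Icc (by omega) hρ hρ₁ ht
  obtain ⟨hvar₀, hvar₁⟩ := hm₁ ▸ hm₂ ▸
    bernoulliLaplace_pow_sub_mul_pow_mem_Icc (by omega) hρ hρ₁ ht ht₁ hnρt
  have hN₀ : (0 : ℝ) < N := by linarith
  have hvar : 0.1 * (1 / (N : ℝ)) ≤ (m₁ - m₂) / N := by
    rw [← mul_div_assoc, mul_one]; exact div_le_div_of_nonneg_right hvar₀ hN₀.le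
  have hvar' : (m₁ - m₂) / N ≤ 1 / N := div_le_div_of_nonneg_right hvar₁ hN₀.le
  constructor
  · rcases le_total (t ^ 2) (1 / (N : ℝ)) with h | h
    · rw [max_eq_right h]
      nlinarith [sq_nonneg (m₁ - exp (-1)), one_div_pos.2 hN₀]
    · rw [max_eq_left h]
      -- `d ^ 2 ≤ N` forces sparsity: `ρ ^ 2 (N - 1) ^ 2 ≤ N`.
      have hρ₂₀ : ρ ≤ 1 / 20 := by
        rw [hcast] at hnρt
        rw [div_le_iff₀ hN₀] at h
        by_contra! hρ'
        nlinarith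
      have := pow_le_pow_left₀ (by positivity)
        (hm₁ ▸ le_bernoulliLaplace_pow_sub_exp_neg_one hρ hρ₂₀ ht ht₁ hnρt) 2
      nlinarith [one_div_pos.2 hN₀]
  · have := le_max_left (t ^ 2) (1 / (N : ℝ))
    have := le_max_right (t ^ 2) (1 / (N : ℝ))
    nlinarith

end Analysis

/-- **Theorem 4, homogeneous lower bound.**  Degree process at time 1 on the
Erdős–Rényi graph, all vertices initially in state `a`: conditionally on the graph the
survival indicators `ξ_i` are independent Bernoulli with `P(ξ_i = 1 | G) = e^{−δ_i/d}`
(encoded through conditional expectations of products given the graph σ-algebra).  Then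
`E[(ξ̄_a(1) − e^{−1})²] = Θ(max{1/d², 1/N})`, i.e. `‖ξ̄_a(1) − x_a(1)‖ = Θ(max{1/d, 1/√N})`. -/
theorem stmt_13 :
    ∃ c C d₀ : ℝ, ∃ N₀ : ℕ, 0 < c ∧ 0 < C ∧
      ∀ (N : ℕ) (ρ : ℝ) (Ω : Type) (_ : MeasurableSpace Ω) (μ : Measure Ω),
        IsProbabilityMeasure μ →
        ∀ (A : Ω → Matrix (Fin N) (Fin N) ℝ) (ξ : Ω → Fin N → ℝ),
        N₀ ≤ N → 0 < ρ → d₀ ≤ ((N : ℝ) - 1) * ρ → ((N : ℝ) - 1) * ρ ≤ (N : ℝ) - 1 →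
        IsERGraph μ A ρ →
        (∀ ω i, ξ ω i = 0 ∨ ξ ω i = 1) →
        (∀ i, Measurable fun ω => ξ ω i) →
        -- conditionally on the graph, the `ξ_i` are independent Bernoulli(e^{−δ_i/d}):
        (∀ T : Finset (Fin N),
          μ[(fun ω => ∏ i ∈ T, ξ ω i) | graphSigma A] =ᵐ[μ]
            fun ω => ∏ i ∈ T, Real.exp (-(∑ j, A ω i j) / (((N : ℝ) - 1) * ρ))) →
        c * max (1 / (((N : ℝ) - 1) * ρ) ^ 2) (1 / (N : ℝ)) ≤
            (∫ ω, ((1 / (N : ℝ)) * (∑ i, ξ ω i) - Real.exp (-1)) ^ 2 ∂μ) ∧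
          (∫ ω, ((1 / (N : ℝ)) * (∑ i, ξ ω i) - Real.exp (-1)) ^ 2 ∂μ) ≤
            C * max (1 / (((N : ℝ) - 1) * ρ) ^ 2) (1 / (N : ℝ)) := by
  refine ⟨0.01, 6, 16, 10000, by norm_num, by norm_num, ?_⟩
  intro N ρ Ω _ μ _ A ξ hN hρ hd₁₆ hdN hER h01 hξ hcond
  set d : ℝ := ((N : ℝ) - 1) * ρ with hd
  have : Nonempty (Fin N) := ⟨⟨0, by omega⟩⟩
  have hN₁ : (0 : ℝ) < N - 1 := by
    have : (1 : ℝ) < N := by exact_mod_cast (show 1 < N by omega)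
    linarith
  have hρ₁ : ρ ≤ 1 := le_of_mul_le_mul_left (by linarith) hN₁
  have hmoment : ∀ T : Finset (Fin N), ∫ ω, ∏ i ∈ T, ξ ω i ∂μ =
      ∫ ω, ∏ i ∈ T, Real.exp (-(∑ j, A ω i j) / d) ∂μ := fun T =>
    (integral_condExp (graphSigma_le hER.2.2.2.1)).symm.trans (integral_congr_ae (hcond T))
  have h₁ : ∀ i, ∫ ω, ξ ω i ∂μ = bernoulliLaplace ρ (1 / d) ^ (N - 1) := fun i => by
    simpa only [Finset.prod_singleton, hER.integral_exp_neg_degree hρ.le] using hmoment {i}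
  have h₂ : ∀ i j, i < j → ∫ ω, ξ ω i * ξ ω j ∂μ =
      bernoulliLaplace ρ (2 / d) * bernoulliLaplace ρ (1 / d) ^ (2 * N - 4) := fun i j hij => by
    simpa only [Finset.prod_pair hij.ne, hER.integral_exp_neg_degree_mul hρ.le hij]
      using hmoment {i, j}
  have h₂' : ∀ i j, i ≠ j → _ := fun i j hij => hij.lt_or_gt.elim (h₂ i j) fun hji => by
    simpa only [mul_comm] using h₂ j i hji
  have hmse := integral_sq_average_sub h01 hξ h₁ h₂' (Real.exp (-1))
  rw [Fintype.card_fin] at hmse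
  rw [hmse]
  exact bias_variance_bounds hN hρ.le hρ₁ rfl hd₁₆ rfl rfl
end
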